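/- arXiv:1306.6503 — 3 statements merged into one kernel-verified Lean document; each statement's English description precedes it below -/
import Mathlib

section
/- Let n ≥ 1, let g ∈ L^1_loc(ℝⁿ), and let 0 ≤ s < n. Then H^s({ x ∈ ℝⁿ : limsup_{t→0⁺} t^{−s} ∫_{B(x,t)} |g(z)| dz > 0 }) = 0. -/
open MeasureTheory Metric Filter Set
open scoped ENNReal Topology NNReal

noncomputable section

/-- `g` is the distributional (weak) gradient of `u` on `ℝⁿ`: for every smooth compactly
supported test function `φ` and every direction `v`,
`∫ u ∂ᵥφ = -∫ ⟪g, v⟫ φ`. -/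
def IsWeakGradient {n : ℕ} (u : EuclideanSpace ℝ (Fin n) → ℝ)
    (g : EuclideanSpace ℝ (Fin n) → EuclideanSpace ℝ (Fin n)) : Prop :=
  ∀ φ : EuclideanSpace ℝ (Fin n) → ℝ, ContDiff ℝ (⊤ : ℕ∞) φ → HasCompactSupport φ →
    ∀ v : EuclideanSpace ℝ (Fin n),
      ∫ x, u x * fderiv ℝ φ x v = - ∫ x, (inner ℝ (g x) v : ℝ) * φ x

/-- `u` belongs to `W^{1,p}(ℝⁿ)` with weak gradient `g`. -/
def MemW1p {n : ℕ} (u : EuclideanSpace ℝ (Fin n) → ℝ)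
    (g : EuclideanSpace ℝ (Fin n) → EuclideanSpace ℝ (Fin n)) (p : ℝ≥0∞) : Prop :=
  MemLp u p volume ∧ IsWeakGradient u g ∧ MemLp g p volume

/-- A measure `μ` on `ℝⁿ` is spherical-like with constants `R`, `M`:
`supp μ ⊆ B̄(0,R)` and `μ(B(x,r)) ≤ M r^{n-1}` for all `x` and `r > 0`. -/
def SphericalLike {n : ℕ} (μ : Measure (EuclideanSpace ℝ (Fin n))) (R M : ℝ) : Prop :=
  μ (closedBall (0 : EuclideanSpace ℝ (Fin n)) R)ᶜ = 0 ∧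
  ∀ (x : EuclideanSpace ℝ (Fin n)) (r : ℝ), 0 < r →
    μ (ball x r) ≤ ENNReal.ofReal (M * r ^ (n - 1))

/-- The maximal operator `S_μ u (x) = sup_{t>0} ∫ |u(tz + x)| dμ(z)` associated with `μ`
(the integral against the rescaled measure `μ_t`). -/
def maximalSmu {n : ℕ} (μ : Measure (EuclideanSpace ℝ (Fin n)))
    (u : EuclideanSpace ℝ (Fin n) → ℝ) (x : EuclideanSpace ℝ (Fin n)) : ℝ≥0∞ :=
  ⨆ (t : ℝ) (_ : 0 < t), ∫⁻ z, ENNReal.ofReal |u (t • z + x)| ∂μ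

/-- The Hardy–Littlewood maximal function `M u (x) = sup_{t>0} ⨍_{B(x,t)} |u|`. -/
def hlMaximal {n : ℕ} (u : EuclideanSpace ℝ (Fin n) → ℝ)
    (x : EuclideanSpace ℝ (Fin n)) : ℝ≥0∞ :=
  ⨆ (t : ℝ) (_ : 0 < t), (volume (ball x t))⁻¹ * ∫⁻ z in ball x t, ENNReal.ofReal |u z|

/-- The Riesz potential of order 1: `I₁ g (x) = ∫ g(z) |x - z|^{1-n} dz`. -/
def rieszPotential {n : ℕ} (g : EuclideanSpace ℝ (Fin n) → ℝ)
    (x : EuclideanSpace ℝ (Fin n)) : ℝ≥0∞ :=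
  ∫⁻ z, ENNReal.ofReal (g z) * (ENNReal.ofReal (dist x z ^ (n - 1)))⁻¹

/-- The `p`-capacity of a set `A ⊆ ℝⁿ`, `1 < p < n`: the infimum of `∫ |∇u|^p` over all
`u ∈ Ẇ^{1,p} = {u ∈ L^{p*} : ∇u ∈ L^p}` with `u ≥ 0` and `u ≥ 1` on an open set containing `A`. -/
def pCapacity (n : ℕ) (p : ℝ) (A : Set (EuclideanSpace ℝ (Fin n))) : ℝ≥0∞ :=
  ⨅ (u : EuclideanSpace ℝ (Fin n) → ℝ)
    (g : EuclideanSpace ℝ (Fin n) → EuclideanSpace ℝ (Fin n))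
    (_ : MemLp u (ENNReal.ofReal ((n : ℝ) * p / ((n : ℝ) - p))) volume)
    (_ : IsWeakGradient u g) (_ : MemLp g (ENNReal.ofReal p) volume)
    (_ : ∀ x, 0 ≤ u x)
    (_ : ∃ U, IsOpen U ∧ A ⊆ U ∧ ∀ x ∈ U, 1 ≤ u x),
    ∫⁻ x, ENNReal.ofReal (‖g x‖ ^ p)

/-- `u` is `p`-quasicontinuous: for every `ε > 0` there is an open set `U` with
`C_p(U) < ε` such that `u` restricted to `ℝⁿ \ U` is continuous. -/
def QuasiContinuous {n : ℕ} (p : ℝ) (u : EuclideanSpace ℝ (Fin n) → ℝ) : Prop :=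
  ∀ ε : ℝ, 0 < ε → ∃ U : Set (EuclideanSpace ℝ (Fin n)),
    IsOpen U ∧ pCapacity n p U < ENNReal.ofReal ε ∧ ContinuousOn u Uᶜ

private lemma key (n : ℕ) (g : EuclideanSpace ℝ (Fin n) → ℝ)
    (hg : LocallyIntegrable g volume) (s : ℝ) (hs0 : 0 ≤ s) (hsn : s < n)
    (ε : ℝ≥0∞) (hε0 : ε ≠ 0) (hεt : ε ≠ ∞) (m : ℕ) :
    μH[s] ({x : EuclideanSpace ℝ (Fin n) | ε < Filter.limsup
        (fun t : ℝ => (ENNReal.ofReal t) ^ (-s) * ∫⁻ z in ball x t, ENNReal.ofReal |g z|)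
        (𝓝[>] (0 : ℝ))} ∩ closedBall 0 m) = 0 := by
  set F : Set (EuclideanSpace ℝ (Fin n)) := {x : EuclideanSpace ℝ (Fin n) | ε < Filter.limsup
      (fun t : ℝ => (ENNReal.ofReal t) ^ (-s) * ∫⁻ z in ball x t, ENNReal.ofReal |g z|)
      (𝓝[>] (0 : ℝ))} ∩ closedBall 0 m with hF
  have δpos : ∀ j : ℕ, (0:ℝ) < 1/(j+1) := fun j => by positivity
  -- choice of radii
  have exr : ∀ (j : ℕ) (x : ↥F), ∃ r : ℝ, 0 < r ∧ r < 1/(j+1) ∧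
      ε * (ENNReal.ofReal r) ^ s < ∫⁻ z in ball (x:EuclideanSpace ℝ (Fin n)) r, ENNReal.ofReal |g z| := by
    intro j x
    have hx : ε < Filter.limsup
        (fun t : ℝ => (ENNReal.ofReal t) ^ (-s) * ∫⁻ z in ball (x:EuclideanSpace ℝ (Fin n)) t, ENNReal.ofReal |g z|)
        (𝓝[>] (0 : ℝ)) := x.2.1
    have hfreq := Filter.frequently_lt_of_lt_limsup (by isBoundedDefault) hx
    have hmem : ∀ᶠ t in 𝓝[>] (0:ℝ), t ∈ Ioo (0:ℝ) (1/(j+1)) :=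
      Filter.eventually_of_mem (Ioo_mem_nhdsGT_of_mem ⟨le_refl 0, δpos j⟩) fun _ h => h
    obtain ⟨t, ht1, ht2⟩ := (hfreq.and_eventually hmem).exists
    refine ⟨t, ht2.1, ht2.2, ?_⟩
    have h0 : (ENNReal.ofReal t) ^ s ≠ 0 :=
      (ENNReal.rpow_pos (ENNReal.ofReal_pos.2 ht2.1) ENNReal.ofReal_ne_top).ne'
    have htop : (ENNReal.ofReal t) ^ s ≠ ∞ := by
      refine ENNReal.rpow_ne_top_of_nonneg hs0 ENNReal.ofReal_ne_top
    rw [ENNReal.rpow_neg] at ht1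
    have := ENNReal.mul_lt_mul_right h0 htop ht1
    calc ε * ENNReal.ofReal t ^ s
        < ((ENNReal.ofReal t ^ s)⁻¹ * ∫⁻ z in ball (x:EuclideanSpace ℝ (Fin n)) t, ENNReal.ofReal |g z|)
            * ENNReal.ofReal t ^ s := by
          rw [mul_comm ε, mul_comm _ (ENNReal.ofReal t ^ s)]; exact this
      _ = ∫⁻ z in ball (x:EuclideanSpace ℝ (Fin n)) t, ENNReal.ofReal |g z| := by
          rw [mul_right_comm, ENNReal.inv_mul_cancel h0 htop, one_mul]
  choose rad radpos radlt radint using exr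
  -- Vitali covering
  have exu : ∀ j : ℕ, ∃ u : Set ↥F,
      (u.PairwiseDisjoint fun a => closedBall (a:EuclideanSpace ℝ (Fin n)) (rad j a)) ∧
      ∀ a : ↥F, ∃ b ∈ u, closedBall (a:EuclideanSpace ℝ (Fin n)) (rad j a) ⊆ closedBall (b:EuclideanSpace ℝ (Fin n)) (4 * rad j b) := by
    intro j
    obtain ⟨u, _, hd, hc⟩ := Vitali.exists_disjoint_subfamily_covering_enlargement_closedBall
      (univ : Set ↥F) (fun a => (a:EuclideanSpace ℝ (Fin n))) (rad j) (1/(j+1)) (fun a _ => (radlt j a).le) 4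
      (by norm_num)
    exact ⟨u, hd, fun a => by simpa using hc a (mem_univ a)⟩
  choose u hdisj hcov using exu
  have ucnt : ∀ j, (u j).Countable := fun j =>
    (hdisj j).countable_of_nonempty_interior fun b _ =>
      ((nonempty_ball.2 (radpos j b)).mono ball_subset_interior_closedBall)
  haveI : ∀ j, Countable (u j) := fun j => (ucnt j).to_subtype
  -- the covering sets and the union of the small balls
  set A : ℕ → Set (EuclideanSpace ℝ (Fin n)) := fun j => ⋃ (b : u j), ball ((b : ↥F) : EuclideanSpace ℝ (Fin n)) (rad j (b : ↥F)) with hA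
  have hAmeas : ∀ j, MeasurableSet (A j) := fun j =>
    MeasurableSet.iUnion fun b => measurableSet_ball
  have hdisj' : ∀ j, Pairwise (Function.onFun Disjoint
      (fun (b : u j) => ball ((b : ↥F) : EuclideanSpace ℝ (Fin n)) (rad j (b : ↥F)))) := by
    intro j b c hbc
    exact ((hdisj j) b.2 c.2 (Subtype.coe_injective.ne_iff.2 hbc)).mono
      ball_subset_closedBall ball_subset_closedBall
  have hsum_int : ∀ j, ∑' (b : u j), ∫⁻ z in ball ((b : ↥F) : EuclideanSpace ℝ (Fin n)) (rad j b), ENNReal.ofReal |g z|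
      = ∫⁻ z in A j, ENNReal.ofReal |g z| :=
    fun j => (lintegral_iUnion (fun b => measurableSet_ball) (hdisj' j) _).symm
  -- diameter bounds
  have hdiam8 : ∀ (j : ℕ) (b : ↥F), EMetric.diam (closedBall (b : EuclideanSpace ℝ (Fin n)) (4 * rad j b))
      ≤ ENNReal.ofReal (8 * rad j b) := by
    intro j b
    have h4 : (0:ℝ) ≤ 4 * rad j b := by have := (radpos j b); linarith
    rw [← Metric.emetric_closedBall h4]
    refine le_trans EMetric.diam_closedBall ?_
    rw [show (2:ℝ≥0∞) = ENNReal.ofReal 2 by simp, ← ENNReal.ofReal_mul (by norm_num)]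
    exact ENNReal.ofReal_le_ofReal (by linarith)
  have hdiam : ∀ (j : ℕ) (b : u j), EMetric.diam (closedBall ((b : ↥F) : EuclideanSpace ℝ (Fin n)) (4 * rad j b))
      ≤ ENNReal.ofReal (8/(j+1)) := by
    intro j b
    refine (hdiam8 j b).trans (ENNReal.ofReal_le_ofReal ?_)
    have h1 := (radlt j (b : ↥F))
    rw [div_eq_mul_inv] at h1 ⊢
    nlinarith [h1]
  -- rad^s is controlled by the integral
  have hrs : ∀ (j : ℕ) (b : ↥F), (ENNReal.ofReal (rad j b)) ^ s
      ≤ ε⁻¹ * ∫⁻ z in ball (b : EuclideanSpace ℝ (Fin n)) (rad j b), ENNReal.ofReal |g z| := by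
    intro j b
    calc (ENNReal.ofReal (rad j b)) ^ s
        = ε⁻¹ * (ε * (ENNReal.ofReal (rad j b)) ^ s) := by
          rw [← mul_assoc, ENNReal.inv_mul_cancel hε0 hεt, one_mul]
      _ ≤ ε⁻¹ * ∫⁻ z in ball (b : EuclideanSpace ℝ (Fin n)) (rad j b), ENNReal.ofReal |g z| :=
          mul_le_mul_right (radint j b).le _
  -- the term bound for the Hausdorff sums
  have hterm : ∀ (j : ℕ) (b : u j),
      EMetric.diam (closedBall ((b : ↥F) : EuclideanSpace ℝ (Fin n)) (4 * rad j b)) ^ s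
      ≤ ENNReal.ofReal 8 ^ s * ε⁻¹
          * ∫⁻ z in ball ((b : ↥F) : EuclideanSpace ℝ (Fin n)) (rad j b), ENNReal.ofReal |g z| := by
    intro j b
    calc EMetric.diam (closedBall ((b : ↥F) : EuclideanSpace ℝ (Fin n)) (4 * rad j b)) ^ s
        ≤ (ENNReal.ofReal (8 * rad j b)) ^ s := ENNReal.rpow_le_rpow (hdiam8 j b) hs0
      _ = ENNReal.ofReal 8 ^ s * (ENNReal.ofReal (rad j b)) ^ s := by
          rw [ENNReal.ofReal_mul (by norm_num), ENNReal.mul_rpow_of_nonneg _ _ hs0]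
      _ ≤ ENNReal.ofReal 8 ^ s
            * (ε⁻¹ * ∫⁻ z in ball ((b : ↥F) : EuclideanSpace ℝ (Fin n)) (rad j b), ENNReal.ofReal |g z|) :=
          mul_le_mul_right (hrs j b) _
      _ = ENNReal.ofReal 8 ^ s * ε⁻¹
            * ∫⁻ z in ball ((b : ↥F) : EuclideanSpace ℝ (Fin n)) (rad j b), ENNReal.ofReal |g z| := by
          rw [mul_assoc]
  -- finiteness of the integral over the big closed ball
  have hGint : IntegrableOn g (closedBall (0:EuclideanSpace ℝ (Fin n)) (m+1)) volume :=
    hg.integrableOn_isCompact (isCompact_closedBall _ _)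
  set G := ∫⁻ z in closedBall (0:EuclideanSpace ℝ (Fin n)) (m+1), ENNReal.ofReal |g z| with hG
  have hGfin : G ≠ ∞ := by
    have h2 := hGint.2
    rw [hasFiniteIntegral_def] at h2
    have hGe : G = ∫⁻ z in closedBall (0:EuclideanSpace ℝ (Fin n)) (m+1), (‖g z‖₊ : ℝ≥0∞) := by
      refine lintegral_congr fun z => ?_
      rw [← enorm_eq_nnnorm, Real.enorm_eq_ofReal_abs]
    rw [hGe]; exact h2.ne
  have hAsub : ∀ j, A j ⊆ closedBall (0:EuclideanSpace ℝ (Fin n)) (m+1) := by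
    intro j x hx
    rcases mem_iUnion.1 hx with ⟨b, hb⟩
    have hbm : dist ((b : ↥F) : EuclideanSpace ℝ (Fin n)) 0 ≤ m := mem_closedBall.1 (b : ↥F).2.2
    have hr1 : rad j (b : ↥F) ≤ 1 := by
      refine le_trans (radlt j _).le ?_
      rw [div_le_one (by positivity)]
      linarith [Nat.cast_nonneg (α := ℝ) j]
    have htri : dist x 0 ≤ dist x ((b : ↥F) : EuclideanSpace ℝ (Fin n)) + dist ((b : ↥F) : EuclideanSpace ℝ (Fin n)) 0 := dist_triangle _ _ _
    have hxb : dist x ((b : ↥F) : EuclideanSpace ℝ (Fin n)) < rad j (b : ↥F) := mem_ball.1 hb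
    rw [mem_closedBall]
    push_cast
    linarith
  have hsums : ∀ j, ∑' (b : u j), (ENNReal.ofReal (rad j b)) ^ s ≤ ε⁻¹ * G := by
    intro j
    calc ∑' (b : u j), (ENNReal.ofReal (rad j b)) ^ s
        ≤ ∑' (b : u j), ε⁻¹ * ∫⁻ z in ball ((b : ↥F) : EuclideanSpace ℝ (Fin n)) (rad j b), ENNReal.ofReal |g z| :=
          ENNReal.tsum_le_tsum fun b => hrs j b
      _ = ε⁻¹ * ∑' (b : u j), ∫⁻ z in ball ((b : ↥F) : EuclideanSpace ℝ (Fin n)) (rad j b), ENNReal.ofReal |g z| :=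
          ENNReal.tsum_mul_left
      _ = ε⁻¹ * ∫⁻ z in A j, ENNReal.ofReal |g z| := by rw [hsum_int j]
      _ ≤ ε⁻¹ * G := mul_le_mul_right (lintegral_mono_set (hAsub j)) _
  -- volume of balls
  haveI : Nontrivial (EuclideanSpace ℝ (Fin n)) := by
    refine Module.nontrivial_of_finrank_pos (R := ℝ) ?_
    rw [finrank_euclideanSpace_fin]
    have : (0:ℝ) < n := lt_of_le_of_lt hs0 hsn
    exact_mod_cast this
  have hvolball : ∀ (x : EuclideanSpace ℝ (Fin n)) (r : ℝ), 0 < r →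
      volume (ball x r) = ENNReal.ofReal (r ^ n) * volume (ball (0:EuclideanSpace ℝ (Fin n)) 1) := by
    intro x r hr
    have h := Measure.addHaar_ball (volume : Measure (EuclideanSpace ℝ (Fin n))) x hr.le
    rwa [finrank_euclideanSpace_fin] at h
  set c := volume (ball (0:EuclideanSpace ℝ (Fin n)) 1) with hc
  have hcfin : c ≠ ∞ := measure_ball_lt_top.ne
  have hns0 : (0:ℝ) ≤ (n:ℝ) - s := by linarith
  have hvol : ∀ j, volume (A j)
      ≤ (c * (ε⁻¹ * G)) * ENNReal.ofReal (1/(j+1)) ^ ((n:ℝ) - s) := by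
    intro j
    calc volume (A j) ≤ ∑' (b : u j), volume (ball ((b : ↥F) : EuclideanSpace ℝ (Fin n)) (rad j b)) :=
          measure_iUnion_le _
      _ = ∑' (b : u j), ENNReal.ofReal ((rad j b : ℝ) ^ n) * c :=
          tsum_congr fun b => hvolball _ _ (radpos j b)
      _ ≤ ∑' (b : u j), (ENNReal.ofReal (rad j b)) ^ s
            * (ENNReal.ofReal (1/(j+1)) ^ ((n:ℝ) - s) * c) := by
          refine ENNReal.tsum_le_tsum fun b => ?_
          rw [← mul_assoc]
          refine mul_le_mul_left ?_ c
          have ha0 : ENNReal.ofReal (rad j b) ≠ 0 := by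
            simp [ENNReal.ofReal_eq_zero]; linarith [radpos j b]
          have hat : ENNReal.ofReal (rad j b) ≠ ∞ := ENNReal.ofReal_ne_top
          have h1 : ENNReal.ofReal ((rad j b : ℝ) ^ n) = ENNReal.ofReal (rad j b) ^ ((n:ℝ)) := by
            rw [ENNReal.ofReal_pow (radpos j b).le, ENNReal.rpow_natCast]
          have h2 : ENNReal.ofReal (rad j b) ^ ((n:ℝ))
              = ENNReal.ofReal (rad j b) ^ s * ENNReal.ofReal (rad j b) ^ ((n:ℝ) - s) := by
            rw [← ENNReal.rpow_add _ _ ha0 hat]; norm_num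
          rw [h1, h2]
          refine mul_le_mul_right ?_ _
          exact ENNReal.rpow_le_rpow (ENNReal.ofReal_le_ofReal (radlt j b).le) hns0
      _ = (∑' (b : u j), (ENNReal.ofReal (rad j b)) ^ s)
            * (ENNReal.ofReal (1/(j+1)) ^ ((n:ℝ) - s) * c) := ENNReal.tsum_mul_right
      _ ≤ (ε⁻¹ * G) * (ENNReal.ofReal (1/(j+1)) ^ ((n:ℝ) - s) * c) :=
          mul_le_mul_left (hsums j) _
      _ = (c * (ε⁻¹ * G)) * ENNReal.ofReal (1/(j+1)) ^ ((n:ℝ) - s) := by ring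
  -- the volumes tend to 0
  have hDto : Tendsto (fun j : ℕ => ENNReal.ofReal (1/((j:ℝ)+1)) ^ ((n:ℝ) - s)) atTop (𝓝 0) := by
    have hns : (0:ℝ) < (n:ℝ) - s := by linarith
    have h1 : Tendsto (fun j : ℕ => ((j:ℝ)+1)) atTop atTop :=
      tendsto_atTop_add_const_right _ 1 tendsto_natCast_atTop_atTop
    have h2 : Tendsto (fun j : ℕ => ((j:ℝ)+1) ^ (-((n:ℝ) - s))) atTop (𝓝 0) :=
      (tendsto_rpow_neg_atTop hns).comp h1
    have h3 : Tendsto (fun j : ℕ => ENNReal.ofReal (((j:ℝ)+1) ^ (-((n:ℝ) - s)))) atTop (𝓝 0) := by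
      simpa using ENNReal.tendsto_ofReal h2
    refine h3.congr fun j => ?_
    rw [ENNReal.ofReal_rpow_of_nonneg (by positivity) hns.le]
    congr 1
    rw [Real.rpow_neg (by positivity), one_div, Real.inv_rpow (by positivity)]
  have hvolto : Tendsto (fun j => volume (A j)) atTop (𝓝 0) := by
    have hKc : c * (ε⁻¹ * G) ≠ ∞ :=
      ENNReal.mul_ne_top hcfin (ENNReal.mul_ne_top (ENNReal.inv_ne_top.2 hε0) hGfin)
    have h := ENNReal.Tendsto.const_mul hDto (Or.inr hKc)
    rw [mul_zero] at h
    exact tendsto_of_tendsto_of_tendsto_of_le_of_le tendsto_const_nhds h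
      (fun j => zero_le) hvol
  -- small integrals
  set ν := volume.restrict (closedBall (0:EuclideanSpace ℝ (Fin n)) (m+1)) with hν
  have hνfin : ∫⁻ z, ENNReal.ofReal |g z| ∂ν ≠ ∞ := hGfin
  have hνA : Tendsto (fun j => ν (A j)) atTop (𝓝 0) :=
    tendsto_of_tendsto_of_tendsto_of_le_of_le tendsto_const_nhds hvolto
      (fun j => zero_le) (fun j => Measure.restrict_apply_le _ _)
  have hIto : Tendsto (fun j => ∫⁻ z in A j, ENNReal.ofReal |g z|) atTop (𝓝 0) := by
    have h := tendsto_setLIntegral_zero hνfin hνA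
    refine h.congr fun j => ?_
    rw [hν, Measure.restrict_restrict (hAmeas j), inter_eq_self_of_subset_left (hAsub j)]
  -- conclusion
  set K := ENNReal.ofReal 8 ^ s * ε⁻¹ with hKdef
  have hKfin : K ≠ ∞ :=
    ENNReal.mul_ne_top (ENNReal.rpow_ne_top_of_nonneg hs0 ENNReal.ofReal_ne_top)
      (ENNReal.inv_ne_top.2 hε0)
  have hbto : Tendsto (fun j => K * ∫⁻ z in A j, ENNReal.ofReal |g z|) atTop (𝓝 0) := by
    have h := ENNReal.Tendsto.const_mul hIto (Or.inr hKfin)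
    rwa [mul_zero] at h
  have hcover : ∀ j : ℕ, F ⊆ ⋃ (b : u j), closedBall ((b : ↥F) : EuclideanSpace ℝ (Fin n)) (4 * rad j (b : ↥F)) := by
    intro j x hx
    obtain ⟨b, hb, hsub⟩ := hcov j ⟨x, hx⟩
    exact mem_iUnion.2 ⟨⟨b, hb⟩, hsub (mem_closedBall_self (radpos j ⟨x, hx⟩).le)⟩
  have hrto : Tendsto (fun j : ℕ => ENNReal.ofReal (8/((j:ℝ)+1))) atTop (𝓝 0) := by
    have h : Tendsto (fun j : ℕ => 8/((j:ℝ)+1)) atTop (𝓝 0) :=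
      tendsto_const_nhds.div_atTop (tendsto_atTop_add_const_right _ 1 tendsto_natCast_atTop_atTop)
    simpa using ENNReal.tendsto_ofReal h
  have main := Measure.hausdorffMeasure_le_liminf_tsum (d := s) F
      (fun j : ℕ => ENNReal.ofReal (8/((j:ℝ)+1))) hrto
      (fun (j : ℕ) (b : u j) => closedBall ((b : ↥F) : EuclideanSpace ℝ (Fin n)) (4 * rad j (b : ↥F)))
      (Filter.Eventually.of_forall fun j b => hdiam j b)
      (Filter.Eventually.of_forall hcover)
  refine le_antisymm (main.trans ?_) (zero_le)
  have hle : ∀ j : ℕ, ∑' (b : u j), EMetric.diam (closedBall ((b : ↥F) : EuclideanSpace ℝ (Fin n)) (4 * rad j (b : ↥F))) ^ s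
      ≤ K * ∫⁻ z in A j, ENNReal.ofReal |g z| := by
    intro j
    calc ∑' (b : u j), EMetric.diam (closedBall ((b : ↥F) : EuclideanSpace ℝ (Fin n)) (4 * rad j (b : ↥F))) ^ s
        ≤ ∑' (b : u j), K * ∫⁻ z in ball ((b : ↥F) : EuclideanSpace ℝ (Fin n)) (rad j b), ENNReal.ofReal |g z| :=
          ENNReal.tsum_le_tsum fun b => hterm j b
      _ = K * ∑' (b : u j), ∫⁻ z in ball ((b : ↥F) : EuclideanSpace ℝ (Fin n)) (rad j b), ENNReal.ofReal |g z| :=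
          ENNReal.tsum_mul_left
      _ = K * ∫⁻ z in A j, ENNReal.ofReal |g z| := by rw [hsum_int j]
  calc Filter.liminf (fun j : ℕ =>
        ∑' (b : u j), EMetric.diam (closedBall ((b : ↥F) : EuclideanSpace ℝ (Fin n)) (4 * rad j (b : ↥F))) ^ s) atTop
      ≤ Filter.liminf (fun j => K * ∫⁻ z in A j, ENNReal.ofReal |g z|) atTop :=
        Filter.liminf_le_liminf (Filter.Eventually.of_forall hle)
    _ = 0 := hbto.liminf_eq

/-- for `g ∈ L¹_loc(ℝⁿ)` and `0 ≤ s < n`, the set of points `x` where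
`limsup_{t→0⁺} t^{-s} ∫_{B(x,t)} |g| > 0` has `s`-dimensional Hausdorff measure zero. -/
theorem statement8 (n : ℕ) (hn : 1 ≤ n)
    (g : EuclideanSpace ℝ (Fin n) → ℝ) (hg : LocallyIntegrable g volume)
    (s : ℝ) (hs0 : 0 ≤ s) (hsn : s < n) :
    μH[s] {x : EuclideanSpace ℝ (Fin n) |
      0 < Filter.limsup
        (fun t : ℝ => (ENNReal.ofReal t) ^ (-s) * ∫⁻ z in ball x t, ENNReal.ofReal |g z|)
        (𝓝[>] (0 : ℝ))} = 0 := by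
  have hsub : {x : EuclideanSpace ℝ (Fin n) |
      0 < Filter.limsup
        (fun t : ℝ => (ENNReal.ofReal t) ^ (-s) * ∫⁻ z in ball x t, ENNReal.ofReal |g z|)
        (𝓝[>] (0 : ℝ))} ⊆
      ⋃ (k : ℕ) (m : ℕ), ({x : EuclideanSpace ℝ (Fin n) | (((k:ℝ≥0∞))+1)⁻¹ < Filter.limsup
        (fun t : ℝ => (ENNReal.ofReal t) ^ (-s) * ∫⁻ z in ball x t, ENNReal.ofReal |g z|)
        (𝓝[>] (0 : ℝ))} ∩ closedBall 0 m) := by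
    intro x hx
    obtain ⟨k, hk⟩ := ENNReal.exists_inv_nat_lt (ne_of_gt hx)
    have hk' : (((k:ℝ≥0∞))+1)⁻¹ < Filter.limsup
        (fun t : ℝ => (ENNReal.ofReal t) ^ (-s) * ∫⁻ z in ball x t, ENNReal.ofReal |g z|)
        (𝓝[>] (0 : ℝ)) :=
      lt_of_le_of_lt (ENNReal.inv_le_inv.2 (le_self_add)) hk
    refine mem_iUnion.2 ⟨k, mem_iUnion.2 ⟨⌈‖x‖⌉₊, hk', ?_⟩⟩
    rw [mem_closedBall, dist_zero_right]
    exact Nat.le_ceil _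
  refine measure_mono_null hsub ?_
  refine measure_iUnion_null fun k => measure_iUnion_null fun m => ?_
  refine key n g hg s hs0 hsn _ ?_ ?_ m
  · simp
  · simp [ENNReal.add_eq_top]
end
end

section
/- Let n ≥ 2, 1 < p < n, and g ∈ L^p(ℝⁿ). Then H^{n−p}({ x ∈ ℝⁿ : limsup_{t→0⁺} t^{1−n} ∫_{B(x,t)} |g(z)| dz > 0 }) = 0. -/
open MeasureTheory Metric Filter Set
open scoped ENNReal Topology NNReal

noncomputable section

lemma aux_diam_closedBall {X : Type*} [MetricSpace X] (x : X) {r : ℝ} (hr : 0 ≤ r) :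
    EMetric.diam (closedBall x r) ≤ ENNReal.ofReal (2 * r) := by
  refine EMetric.diam_le fun y hy z hz => ?_
  rw [edist_dist]
  exact ENNReal.ofReal_le_ofReal <| by
    have h1 := mem_closedBall.1 hy
    have h2 := mem_closedBall.1 hz
    calc dist y z ≤ dist y x + dist x z := dist_triangle _ _ _
      _ ≤ r + r := add_le_add h1 (by rwa [dist_comm] at h2)
      _ = 2 * r := by ring

lemma aux_frostman {X : Type*} [MetricSpace X] [MeasurableSpace X] [BorelSpace X]
    (ν : Measure X) [IsFiniteMeasure ν] {s : ℝ} (hs : 0 < s) {c : ℝ≥0∞} (hc0 : c ≠ 0)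
    (hctop : c ≠ ∞) {F U : Set X} (hU : IsOpen U) (hFU : F ⊆ U)
    (hF : ∀ x ∈ F, ∀ δ : ℝ, 0 < δ →
      ∃ ρ : ℝ, 0 < ρ ∧ ρ < δ ∧ c * ENNReal.ofReal ρ ^ s ≤ ν (ball x ρ)) :
    μH[s] F ≤ (8 : ℝ≥0∞) ^ s * c⁻¹ * ν U := by
  set L : ℝ≥0∞ := (8 : ℝ≥0∞) ^ s * c⁻¹ * ν U with hL
  have key : ∀ m : ℕ, ∃ u : Set (X × ℝ),
      u.Countable ∧
      (∀ b ∈ u, 0 < b.2 ∧ b.2 < 1 / (m + 1) ∧ closedBall b.1 b.2 ⊆ U ∧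
        c * ENNReal.ofReal b.2 ^ s ≤ ν (ball b.1 b.2)) ∧
      u.PairwiseDisjoint (fun b => closedBall b.1 b.2) ∧
      F ⊆ ⋃ b ∈ u, closedBall b.1 (4 * b.2) := by
    intro m
    set δ₀ : ℝ := 1 / (m + 1) with hδ₀
    have hδ₀pos : 0 < δ₀ := by positivity
    set T : Set (X × ℝ) := {b | b.1 ∈ F ∧ 0 < b.2 ∧ b.2 < δ₀ ∧ closedBall b.1 b.2 ⊆ U ∧
      c * ENNReal.ofReal b.2 ^ s ≤ ν (ball b.1 b.2)} with hT
    obtain ⟨u, huT, hdisj, hcov⟩ :=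
      Vitali.exists_disjoint_subfamily_covering_enlargement_closedBall T Prod.fst Prod.snd δ₀
        (fun b hb => hb.2.2.1.le) 4 (by norm_num)
    refine ⟨u, ?_, fun b hb => ⟨(huT hb).2.1, (huT hb).2.2.1, (huT hb).2.2.2.1,
      (huT hb).2.2.2.2⟩, hdisj, ?_⟩
    · -- countability
      have hpos : ∀ b : u, 0 < ν (ball b.1.1 b.1.2) := by
        rintro ⟨b, hb⟩
        have h := (huT hb).2.2.2.2
        refine lt_of_lt_of_le ?_ h
        exact ENNReal.mul_pos hc0 (ENNReal.rpow_pos (ENNReal.ofReal_pos.2 (huT hb).2.1)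
          ENNReal.ofReal_ne_top).ne'
      have hDisj : Pairwise (Function.onFun Disjoint fun b : u => ball b.1.1 b.1.2) := by
        intro i j hij
        have : (i : X × ℝ) ≠ j := Subtype.coe_injective.ne hij
        exact (hdisj i.2 j.2 this).mono ball_subset_closedBall ball_subset_closedBall
      have hcnt := MeasureTheory.Measure.countable_meas_pos_of_disjoint_of_meas_iUnion_ne_top ν
        (fun b : u => measurableSet_ball) hDisj
        (ne_top_of_le_ne_top (measure_ne_top ν univ) (measure_mono (subset_univ _)))
      have : {i : u | 0 < ν (ball i.1.1 i.1.2)} = univ := eq_univ_of_forall fun i => hpos i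
      rw [this] at hcnt
      exact Set.countable_coe_iff.mp (Set.countable_univ_iff.mp hcnt)
    · -- coverage
      intro x hx
      obtain ⟨ε, hεpos, hεU⟩ := Metric.isOpen_iff.1 hU x (hFU hx)
      obtain ⟨ρ, hρ0, hρδ, hρν⟩ := hF x hx (min δ₀ (ε / 2)) (lt_min hδ₀pos (by positivity))
      have hbT : (x, ρ) ∈ T := by
        refine ⟨hx, hρ0, lt_of_lt_of_le hρδ (min_le_left _ _), ?_, hρν⟩
        exact (closedBall_subset_ball (lt_of_lt_of_le hρδ
          ((min_le_right _ _).trans (by linarith)))).trans hεU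
      obtain ⟨b, hbu, hsub⟩ := hcov (x, ρ) hbT
      exact mem_biUnion hbu (hsub (mem_closedBall_self hρ0.le))
  choose u hcnt hmem hdisj hcov using key
  haveI : ∀ m, Countable ↥(u m) := fun m => (hcnt m).to_subtype
  have hr0 : Tendsto (fun m : ℕ => ENNReal.ofReal (8 / (m + 1))) atTop (𝓝 0) := by
    rw [show (0 : ℝ≥0∞) = ENNReal.ofReal 0 by simp]
    apply ENNReal.tendsto_ofReal
    have : Tendsto (fun m : ℕ => (m : ℝ) + 1) atTop atTop :=
      tendsto_natCast_atTop_atTop.atTop_add tendsto_const_nhds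
    exact Tendsto.div_atTop tendsto_const_nhds this
  have hdiam : ∀ (m : ℕ) (b : ↥(u m)),
      EMetric.diam (closedBall b.1.1 (4 * b.1.2)) ≤ ENNReal.ofReal (8 / (m + 1)) := by
    intro m b
    have h1 := (hmem m b.1 b.2).1
    have h2 := (hmem m b.1 b.2).2.1
    have h3 : (8:ℝ) / ((m:ℝ)+1) = 8 * (1/((m:ℝ)+1)) := by ring
    refine (aux_diam_closedBall _ (by linarith)).trans (ENNReal.ofReal_le_ofReal (by rw [h3]; linarith))
  have hmain := Measure.hausdorffMeasure_le_liminf_tsum (ι := fun m => ↥(u m)) s F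
    (fun m : ℕ => ENNReal.ofReal (8 / (m + 1))) hr0
    (fun m (b : ↥(u m)) => closedBall b.1.1 (4 * b.1.2))
    (Eventually.of_forall hdiam)
    (Eventually.of_forall fun m => by
      intro x hx
      obtain ⟨b, hb, hxb⟩ := Set.mem_iUnion₂.mp (hcov m hx)
      exact Set.mem_iUnion.mpr ⟨⟨b, hb⟩, hxb⟩)
  refine hmain.trans ?_
  have hsum : ∀ m : ℕ, ∑' b : ↥(u m), EMetric.diam (closedBall b.1.1 (4 * b.1.2)) ^ s ≤ L := by
    intro m
    have step1 : ∀ b : ↥(u m), EMetric.diam (closedBall b.1.1 (4 * b.1.2)) ^ s ≤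
        (8 : ℝ≥0∞) ^ s * c⁻¹ * ν (ball b.1.1 b.1.2) := by
      intro b
      obtain ⟨h1, h2, h3, h4⟩ := hmem m b.1 b.2
      have hd : EMetric.diam (closedBall b.1.1 (4 * b.1.2)) ≤ ENNReal.ofReal (8 * b.1.2) :=
        (aux_diam_closedBall _ (by linarith)).trans (by norm_num [ENNReal.ofReal_le_ofReal_iff]; ring_nf; rfl)
      calc EMetric.diam (closedBall b.1.1 (4 * b.1.2)) ^ s
          ≤ ENNReal.ofReal (8 * b.1.2) ^ s := ENNReal.rpow_le_rpow hd hs.le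
        _ = (8 : ℝ≥0∞) ^ s * ENNReal.ofReal b.1.2 ^ s := by
            rw [ENNReal.ofReal_mul (by norm_num), ENNReal.mul_rpow_of_nonneg _ _ hs.le]
            norm_num
        _ ≤ (8 : ℝ≥0∞) ^ s * (c⁻¹ * ν (ball b.1.1 b.1.2)) := by
            gcongr
            calc ENNReal.ofReal b.1.2 ^ s = c⁻¹ * (c * ENNReal.ofReal b.1.2 ^ s) := by
                  rw [← mul_assoc, ENNReal.inv_mul_cancel hc0 hctop, one_mul]
              _ ≤ c⁻¹ * ν (ball b.1.1 b.1.2) := by gcongr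
        _ = (8 : ℝ≥0∞) ^ s * c⁻¹ * ν (ball b.1.1 b.1.2) := by rw [mul_assoc]
    calc ∑' b : ↥(u m), EMetric.diam (closedBall b.1.1 (4 * b.1.2)) ^ s
        ≤ ∑' b : ↥(u m), (8 : ℝ≥0∞) ^ s * c⁻¹ * ν (ball b.1.1 b.1.2) :=
          ENNReal.tsum_le_tsum step1
      _ = (8 : ℝ≥0∞) ^ s * c⁻¹ * ∑' b : ↥(u m), ν (ball b.1.1 b.1.2) := ENNReal.tsum_mul_left
      _ = (8 : ℝ≥0∞) ^ s * c⁻¹ * ν (⋃ b : ↥(u m), ball b.1.1 b.1.2) := by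
          rw [measure_iUnion ?_ (fun b => measurableSet_ball)]
          intro i j hij
          exact (hdisj m i.2 j.2 (Subtype.coe_injective.ne hij)).mono
            ball_subset_closedBall ball_subset_closedBall
      _ ≤ L := by
          rw [hL]
          gcongr
          exact iUnion_subset fun b => ball_subset_closedBall.trans (hmem m b.1 b.2).2.2.1
  calc liminf (fun m : ℕ => ∑' b : ↥(u m), EMetric.diam (closedBall b.1.1 (4 * b.1.2)) ^ s) atTop
      ≤ liminf (fun _ : ℕ => L) atTop := liminf_le_liminf (Eventually.of_forall hsum)
    _ = L := liminf_const L

lemma aux_ae_limsup_zero {n : ℕ} (hn : 1 ≤ n) (ν : Measure (EuclideanSpace ℝ (Fin n)))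
    [IsFiniteMeasure ν] {q : ℝ} (hq : 0 < q) :
    ∀ᵐ x : EuclideanSpace ℝ (Fin n),
      limsup (fun t : ℝ => ENNReal.ofReal t ^ (q - n) * ν (ball x t)) (𝓝[>] (0 : ℝ)) = 0 := by
  have hfr : Module.finrank ℝ (EuclideanSpace ℝ (Fin n)) = n := finrank_euclideanSpace_fin
  set V : ℝ≥0∞ := volume (ball (0 : EuclideanSpace ℝ (Fin n)) 1) with hV
  have hVtop : V ≠ ∞ := measure_ball_lt_top.ne
  filter_upwards [Besicovitch.ae_tendsto_rnDeriv ν volume, Measure.rnDeriv_lt_top ν volume]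
    with x hx hD
  set D := ν.rnDeriv volume x with hDdef
  -- pointwise bound
  have hbound : ∀ t : ℝ, 0 < t →
      ENNReal.ofReal t ^ (q - n) * ν (ball x t) ≤
        (ν (closedBall x t) / volume (closedBall x t)) * (ENNReal.ofReal t ^ q * V) := by
    intro t ht
    have ht0 : ENNReal.ofReal t ≠ 0 := (ENNReal.ofReal_pos.2 ht).ne'
    have hvol : volume (closedBall x t) = ENNReal.ofReal t ^ (n : ℝ) * V := by
      rw [Measure.addHaar_closedBall _ x ht.le, hfr, ← Real.rpow_natCast t n,
        ENNReal.ofReal_rpow_of_pos ht]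
    have hvol0 : volume (closedBall x t) ≠ 0 :=
      (measure_closedBall_pos volume x ht).ne'
    have hvoltop : volume (closedBall x t) ≠ ∞ := measure_closedBall_lt_top.ne
    have hcb : ν (closedBall x t) =
        (ν (closedBall x t) / volume (closedBall x t)) * volume (closedBall x t) :=
      (ENNReal.div_mul_cancel hvol0 hvoltop).symm
    calc ENNReal.ofReal t ^ (q - n) * ν (ball x t)
        ≤ ENNReal.ofReal t ^ (q - n) * ν (closedBall x t) := by
          gcongr; exact ball_subset_closedBall
      _ = ENNReal.ofReal t ^ (q - n) *
            ((ν (closedBall x t) / volume (closedBall x t)) * (ENNReal.ofReal t ^ (n : ℝ) * V)) := by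
          rw [← hvol, ← hcb]
      _ = (ν (closedBall x t) / volume (closedBall x t)) *
            ((ENNReal.ofReal t ^ (q - n) * ENNReal.ofReal t ^ (n : ℝ)) * V) := by ring
      _ = (ν (closedBall x t) / volume (closedBall x t)) * (ENNReal.ofReal t ^ q * V) := by
          rw [← ENNReal.rpow_add _ _ ht0 ENNReal.ofReal_ne_top]
          ring_nf
  -- RHS tends to zero
  have h1 : Tendsto (fun t : ℝ => ENNReal.ofReal t ^ q * V) (𝓝[>] (0 : ℝ)) (𝓝 0) := by
    have : Tendsto (fun t : ℝ => ENNReal.ofReal t) (𝓝[>] (0 : ℝ)) (𝓝 0) := by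
      have h0 : Tendsto ENNReal.ofReal (𝓝[>] (0:ℝ)) (𝓝 (ENNReal.ofReal 0)) :=
        (ENNReal.continuous_ofReal.tendsto (0 : ℝ)).mono_left (nhdsWithin_le_nhds (s := Ioi 0))
      simpa using h0
    have h2 := (ENNReal.tendsto_const_mul_rpow_nhds_zero_of_pos hVtop hq).comp this
    simpa [Function.comp_def, mul_comm] using h2
  have hrhs : Tendsto (fun t : ℝ =>
      (ν (closedBall x t) / volume (closedBall x t)) * (ENNReal.ofReal t ^ q * V))
      (𝓝[>] (0 : ℝ)) (𝓝 0) := by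
    have := ENNReal.Tendsto.mul hx (Or.inr ENNReal.zero_ne_top) h1 (Or.inr hD.ne)
    simpa using this
  have htend : Tendsto (fun t : ℝ => ENNReal.ofReal t ^ (q - n) * ν (ball x t))
      (𝓝[>] (0 : ℝ)) (𝓝 0) := by
    refine tendsto_of_tendsto_of_tendsto_of_le_of_le' tendsto_const_nhds hrhs
      (Eventually.of_forall fun t => zero_le) ?_
    filter_upwards [self_mem_nhdsWithin] with t ht
    exact hbound t ht
  exact htend.limsup_eq

/-- for `g ∈ L^p(ℝⁿ)`, `1 < p < n`, the set of points `x` where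
`limsup_{t→0⁺} t^{1-n} ∫_{B(x,t)} |g| > 0` has `(n-p)`-Hausdorff measure zero. -/
theorem statement10 (n : ℕ) (hn : 2 ≤ n) (p : ℝ) (hp1 : 1 < p) (hpn : p < n)
    (g : EuclideanSpace ℝ (Fin n) → ℝ) (hg : MemLp g (ENNReal.ofReal p) volume) :
    μH[(n : ℝ) - p] {x : EuclideanSpace ℝ (Fin n) |
      0 < Filter.limsup
        (fun t : ℝ =>
          (ENNReal.ofReal t) ^ ((1 : ℝ) - n) * ∫⁻ z in ball x t, ENNReal.ofReal |g z|)
        (𝓝[>] (0 : ℝ))} = 0 := by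
  classical
  have hp0 : (0:ℝ) < p := by linarith
  have hs : (0:ℝ) < (n:ℝ) - p := by
    have : (p:ℝ) < n := hpn
    linarith
  set s : ℝ := (n:ℝ) - p with hs_def
  haveI : Nonempty (Fin n) := ⟨⟨0, by omega⟩⟩
  haveI : Nontrivial (EuclideanSpace ℝ (Fin n)) := inferInstance
  have hfr : Module.finrank ℝ (EuclideanSpace ℝ (Fin n)) = n := finrank_euclideanSpace_fin
  have hgm : AEMeasurable g volume := hg.1.aemeasurable
  have hfm : AEMeasurable (fun z => ENNReal.ofReal |g z|) volume :=
    ENNReal.measurable_ofReal.comp_aemeasurable (continuous_abs.measurable.comp_aemeasurable hgm)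
  -- the measure ν = |g|^p dx
  set ν : Measure (EuclideanSpace ℝ (Fin n)) :=
    volume.withDensity (fun z => ENNReal.ofReal |g z| ^ p) with hν_def
  have hint : ∫⁻ z, ENNReal.ofReal |g z| ^ p ∂volume < ∞ := by
    have h1 := hg.2
    rw [eLpNorm_eq_lintegral_rpow_enorm_toReal (ENNReal.ofReal_pos.2 hp0).ne'
      ENNReal.ofReal_ne_top, ENNReal.toReal_ofReal hp0.le] at h1
    have h2 : (∫⁻ z, ‖g z‖ₑ ^ p ∂volume) < ∞ :=
      (ENNReal.rpow_lt_top_iff_of_pos (by positivity : (0:ℝ) < 1/p)).mp h1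
    have h3 : ∫⁻ z, ENNReal.ofReal |g z| ^ p ∂volume = ∫⁻ z, ‖g z‖ₑ ^ p ∂volume :=
      lintegral_congr fun z => by rw [Real.enorm_eq_ofReal_abs]
    rwa [h3]
  haveI : IsFiniteMeasure ν := isFiniteMeasure_withDensity hint.ne
  have hν_ball : ∀ (x : EuclideanSpace ℝ (Fin n)) (t : ℝ),
      ν (ball x t) = ∫⁻ z in ball x t, ENNReal.ofReal |g z| ^ p :=
    fun x t => withDensity_apply _ measurableSet_ball
  -- Hölder
  set q : ℝ := Real.conjExponent p with hq_def
  have hpq : p.HolderConjugate q := Real.HolderConjugate.conjExponent hp1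
  have hq0 : (0:ℝ) < q := hpq.symm.pos
  set V : ℝ≥0∞ := volume (ball (0 : EuclideanSpace ℝ (Fin n)) 1) with hV_def
  have hVtop : V ≠ ∞ := measure_ball_lt_top.ne
  set C : ℝ≥0∞ := V ^ (1/q) with hC_def
  have hCtop : C ≠ ∞ := ENNReal.rpow_ne_top_of_nonneg (one_div_nonneg.2 hq0.le) hVtop
  have holder : ∀ (x : EuclideanSpace ℝ (Fin n)) (t : ℝ), 0 < t →
      (ENNReal.ofReal t) ^ ((1 : ℝ) - n) * ∫⁻ z in ball x t, ENNReal.ofReal |g z| ≤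
      C * (ENNReal.ofReal t ^ (p - n) * ν (ball x t)) ^ (1/p) := by
    intro x t ht
    have ht0 : ENNReal.ofReal t ≠ 0 := (ENNReal.ofReal_pos.2 ht).ne'
    have hHo : ∫⁻ z in ball x t, ENNReal.ofReal |g z| ≤
        (∫⁻ z in ball x t, ENNReal.ofReal |g z| ^ p) ^ (1/p) *
          (volume (ball x t)) ^ (1/q) := by
      have h := ENNReal.lintegral_mul_le_Lp_mul_Lq (volume.restrict (ball x t)) hpq
        hfm.restrict (aemeasurable_const (b := (1:ℝ≥0∞)))
      simpa [hpq.symm.ne_zero] using h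
    have hvol : volume (ball x t) = ENNReal.ofReal t ^ (n:ℝ) * V := by
      rw [Measure.addHaar_ball _ x ht.le, hfr, ← Real.rpow_natCast t n,
        ENNReal.ofReal_rpow_of_pos ht]
    have hexp : (1:ℝ) - n + (n:ℝ) * (1/q) = (p - n) * (1/p) := by
      have hq_eq : q = p / (p - 1) := rfl
      have hp1' : p - 1 ≠ 0 := by linarith
      rw [hq_eq]
      field_simp
      ring
    calc (ENNReal.ofReal t) ^ ((1 : ℝ) - n) * ∫⁻ z in ball x t, ENNReal.ofReal |g z|
        ≤ (ENNReal.ofReal t) ^ ((1 : ℝ) - n) *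
          ((ν (ball x t)) ^ (1/p) * (ENNReal.ofReal t ^ ((n:ℝ) * (1/q)) * C)) := by
          rw [hν_ball x t]
          refine mul_le_mul_right (hHo.trans ?_) _
          rw [hvol, ENNReal.mul_rpow_of_nonneg _ _ (one_div_nonneg.2 hq0.le),
            ← ENNReal.rpow_mul, hC_def]
      _ = (ENNReal.ofReal t ^ ((1:ℝ) - n) * ENNReal.ofReal t ^ ((n:ℝ) * (1/q))) *
            ((ν (ball x t)) ^ (1/p) * C) := by ring
      _ = ENNReal.ofReal t ^ ((p - n) * (1/p)) * ((ν (ball x t)) ^ (1/p) * C) := by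
          rw [← ENNReal.rpow_add _ _ ht0 ENNReal.ofReal_ne_top, hexp]
      _ = C * (ENNReal.ofReal t ^ (p - n) * ν (ball x t)) ^ (1/p) := by
          rw [ENNReal.mul_rpow_of_nonneg _ _ (by positivity : (0:ℝ) ≤ 1/p),
            ← ENNReal.rpow_mul]
          ring
  -- reduction of the limsup
  have claim1 : ∀ x : EuclideanSpace ℝ (Fin n),
      0 < limsup (fun t : ℝ =>
          (ENNReal.ofReal t) ^ ((1 : ℝ) - n) * ∫⁻ z in ball x t, ENNReal.ofReal |g z|)
        (𝓝[>] (0 : ℝ)) →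
      0 < limsup (fun t : ℝ => ENNReal.ofReal t ^ (p - n) * ν (ball x t)) (𝓝[>] (0 : ℝ)) := by
    intro x hx
    by_contra h0
    have hls : limsup (fun t : ℝ => ENNReal.ofReal t ^ (p - n) * ν (ball x t))
        (𝓝[>] (0 : ℝ)) = 0 := by
      simpa using (not_lt.1 h0)
    have hlif : liminf (fun t : ℝ => ENNReal.ofReal t ^ (p - n) * ν (ball x t))
        (𝓝[>] (0 : ℝ)) = 0 :=
      le_antisymm (hls ▸ liminf_le_limsup) (zero_le)
    have htend : Tendsto (fun t : ℝ => ENNReal.ofReal t ^ (p - n) * ν (ball x t))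
        (𝓝[>] (0 : ℝ)) (𝓝 0) := tendsto_of_liminf_eq_limsup hlif hls
    have hcont : Tendsto (fun y : ℝ≥0∞ => C * y ^ (1/p)) (𝓝 0) (𝓝 0) :=
      ENNReal.tendsto_const_mul_rpow_nhds_zero_of_pos hCtop (by positivity)
    have htend2 : Tendsto (fun t : ℝ =>
        C * (ENNReal.ofReal t ^ (p - n) * ν (ball x t)) ^ (1/p)) (𝓝[>] (0 : ℝ)) (𝓝 0) :=
      hcont.comp htend
    have htendA : Tendsto (fun t : ℝ =>
        (ENNReal.ofReal t) ^ ((1 : ℝ) - n) * ∫⁻ z in ball x t, ENNReal.ofReal |g z|)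
        (𝓝[>] (0 : ℝ)) (𝓝 0) := by
      refine tendsto_of_tendsto_of_tendsto_of_le_of_le' tendsto_const_nhds htend2
        (Eventually.of_forall fun t => zero_le) ?_
      filter_upwards [self_mem_nhdsWithin] with t ht
      exact holder x t ht
    rw [htendA.limsup_eq] at hx
    exact lt_irrefl _ hx
  -- the level sets
  set B : EuclideanSpace ℝ (Fin n) → ℝ → ℝ≥0∞ :=
    fun x t => ENNReal.ofReal t ^ (p - n) * ν (ball x t) with hB_def
  set Fk : ℕ → Set (EuclideanSpace ℝ (Fin n)) :=
    fun k => {x | ((k:ℝ≥0∞) + 1)⁻¹ ≤ limsup (B x) (𝓝[>] (0 : ℝ))} with hFk_def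
  have hsub : {x : EuclideanSpace ℝ (Fin n) |
      0 < Filter.limsup
        (fun t : ℝ =>
          (ENNReal.ofReal t) ^ ((1 : ℝ) - n) * ∫⁻ z in ball x t, ENNReal.ofReal |g z|)
        (𝓝[>] (0 : ℝ))} ⊆ ⋃ k, Fk k := by
    intro x hx
    have h1 := claim1 x hx
    obtain ⟨k, hk⟩ := ENNReal.exists_inv_nat_lt h1.ne'
    refine mem_iUnion.2 ⟨k, ?_⟩
    have h2 : ((k:ℝ≥0∞) + 1)⁻¹ ≤ ((k:ℝ≥0∞))⁻¹ := by
      gcongr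
      exact le_self_add
    exact le_trans h2 hk.le
  -- each level set is μH-null
  have hFk_null : ∀ k : ℕ, μH[s] (Fk k) = 0 := by
    intro k
    set ck : ℝ≥0∞ := ((k:ℝ≥0∞) + 1)⁻¹ with hck_def
    have hck0 : ck ≠ 0 := ENNReal.inv_ne_zero.2 (by simp)
    have hck1 : (0:ℝ≥0∞) < (k:ℝ≥0∞) + 1 := lt_of_lt_of_le zero_lt_one le_add_self
    have hcktop : ck ≠ ∞ := ENNReal.inv_ne_top.2 hck1.ne'
    set c : ℝ≥0∞ := ck / 2 with hc_def
    have hc0 : c ≠ 0 := by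
      simp only [hc_def, ne_eq, ENNReal.div_eq_zero_iff, not_or]
      exact ⟨hck0, by norm_num⟩
    have hctop : c ≠ ∞ := by
      simp only [hc_def]
      exact (ENNReal.div_lt_top hcktop (by norm_num)).ne
    have hhalf : c < ck := ENNReal.half_lt_self hck0 hcktop
    -- ν-null
    have hν_null : ν (Fk k) = 0 := by
      have hae := aux_ae_limsup_zero (by omega : 1 ≤ n) ν hp0
      have hvol_null : volume {x : EuclideanSpace ℝ (Fin n) |
          ¬ limsup (B x) (𝓝[>] (0 : ℝ)) = 0} = 0 := by
        simpa [ae_iff] using hae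
      have hFk_sub : Fk k ⊆ {x : EuclideanSpace ℝ (Fin n) |
          ¬ limsup (B x) (𝓝[>] (0 : ℝ)) = 0} := by
        intro x hx heq
        rw [mem_setOf_eq] at hx
        rw [heq] at hx
        exact hck0 (le_antisymm (by simpa using hx) (zero_le))
      exact (withDensity_absolutelyContinuous volume _) (measure_mono_null hFk_sub hvol_null)
    -- frostman hypothesis
    have hFk_F : ∀ x ∈ Fk k, ∀ δ : ℝ, 0 < δ →
        ∃ ρ : ℝ, 0 < ρ ∧ ρ < δ ∧ c * ENNReal.ofReal ρ ^ s ≤ ν (ball x ρ) := by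
      intro x hx δ hδ
      rw [hFk_def, mem_setOf_eq] at hx
      have hfreq : ∃ᶠ t in 𝓝[>] (0:ℝ), c < B x t := by
        by_contra hcon
        rw [not_frequently] at hcon
        have hev : ∀ᶠ t in 𝓝[>] (0:ℝ), B x t ≤ c := by
          filter_upwards [hcon] with t ht using not_lt.1 ht
        have := limsup_le_of_le (by isBoundedDefault) hev
        exact absurd (hx.trans this) (not_le.2 hhalf)
      have hIoo : Ioo (0:ℝ) δ ∈ 𝓝[>] (0:ℝ) := Ioo_mem_nhdsGT_of_mem ⟨le_refl _, hδ⟩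
      obtain ⟨t, ht1, ht2⟩ := (hfreq.and_eventually (eventually_of_mem hIoo fun t ht => ht)).exists
      refine ⟨t, ht2.1, ht2.2, ?_⟩
      have ht0 : ENNReal.ofReal t ^ s ≠ 0 :=
        (ENNReal.rpow_pos (ENNReal.ofReal_pos.2 ht2.1) ENNReal.ofReal_ne_top).ne'
      have httop : ENNReal.ofReal t ^ s ≠ ∞ :=
        ENNReal.rpow_ne_top_of_nonneg hs.le ENNReal.ofReal_ne_top
      have hBx : B x t = (ENNReal.ofReal t ^ s)⁻¹ * ν (ball x t) := by
        simp only [hB_def]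
        have h4 : p - (n:ℝ) = -s := by rw [hs_def]; ring
        rw [h4, ENNReal.rpow_neg]
      have h3 : c * ENNReal.ofReal t ^ s ≤
          ((ENNReal.ofReal t ^ s)⁻¹ * ν (ball x t)) * ENNReal.ofReal t ^ s :=
        mul_le_mul_left (hBx ▸ ht1.le) _
      calc c * ENNReal.ofReal t ^ s ≤
          ((ENNReal.ofReal t ^ s)⁻¹ * ν (ball x t)) * ENNReal.ofReal t ^ s := h3
        _ = ((ENNReal.ofReal t ^ s)⁻¹ * ENNReal.ofReal t ^ s) * ν (ball x t) := by ring
        _ = ν (ball x t) := by rw [ENNReal.inv_mul_cancel ht0 httop, one_mul]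
    -- conclude via outer regularity
    set K : ℝ≥0∞ := (8 : ℝ≥0∞) ^ s * c⁻¹ with hK_def
    have hK0 : K ≠ 0 := by
      refine mul_ne_zero ?_ (ENNReal.inv_ne_zero.2 hctop)
      exact (ENNReal.rpow_pos (by norm_num) (by norm_num)).ne'
    have hKtop : K ≠ ∞ := by
      refine ENNReal.mul_ne_top ?_ (ENNReal.inv_ne_top.2 hc0)
      exact ENNReal.rpow_ne_top_of_nonneg hs.le (by norm_num)
    refine le_antisymm (ENNReal.le_of_forall_pos_le_add fun ε hε _ => ?_) (zero_le)
    have hεK : (0:ℝ≥0∞) < (ε:ℝ≥0∞) / K :=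
      ENNReal.div_pos (by exact_mod_cast hε.ne') hKtop
    obtain ⟨U, hFkU, hUopen, hUlt⟩ :=
      Set.exists_isOpen_lt_of_lt (Fk k) ((ε:ℝ≥0∞) / K) (hν_null ▸ hεK)
    have hfrost := aux_frostman ν hs hc0 hctop hUopen hFkU hFk_F
    calc μH[s] (Fk k) ≤ K * ν U := hfrost
      _ ≤ K * ((ε:ℝ≥0∞) / K) := mul_le_mul_right hUlt.le K
      _ = (ε:ℝ≥0∞) := ENNReal.mul_div_cancel hK0 hKtop
      _ ≤ 0 + (ε:ℝ≥0∞) := by simp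
  refine le_antisymm ?_ (zero_le)
  calc μH[(n : ℝ) - p] {x : EuclideanSpace ℝ (Fin n) |
      0 < Filter.limsup
        (fun t : ℝ =>
          (ENNReal.ofReal t) ^ ((1 : ℝ) - n) * ∫⁻ z in ball x t, ENNReal.ofReal |g z|)
        (𝓝[>] (0 : ℝ))}
      ≤ μH[s] (⋃ k, Fk k) := measure_mono hsub
    _ = 0 := measure_iUnion_null hFk_null
end
end

section
/- Let n ≥ 2 and define f(z) = |z|^{1−n} (log(e/|z|))^{−1−(n−1)/n} for 0 < |z| ≤ 1 and f(z) = 0 otherwise. Then there is a constant c(n) > 0, depending only on n, such that for every x with 0 < |x| ≤ 1/2, ⨍_{S^{n−1}(x,|x|)} f dH^{n−1} ≥ c(n) |x|^{1−n} (log(e/|x|))^{−(n−1)/n}. -/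
open MeasureTheory Metric Filter Set
open scoped ENNReal Topology NNReal

noncomputable section

/-- The function `f(z) = |z|^{1-n} (log(e/|z|))^{-1-(n-1)/n}` for `0 < |z| ≤ 1`,
extended by `0` elsewhere. -/
def exampleFun (n : ℕ) (z : EuclideanSpace ℝ (Fin n)) : ℝ :=
  if 0 < ‖z‖ ∧ ‖z‖ ≤ 1 then
    ‖z‖ ^ ((1 : ℝ) - n) *
      (Real.log (Real.exp 1 / ‖z‖)) ^ (-1 - ((n : ℝ) - 1) / n)
  else 0

open scoped Pointwise

abbrev E (n : ℕ) := EuclideanSpace ℝ (Fin n)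

lemma smul_scaling (m : ℕ) (s : ℝ) (hs : 0 < s) (A : Set (E m)) (d : ℝ) (hd : 0 ≤ d) :
    μH[d] (s • A) = ENNReal.ofReal (s ^ d) * μH[d] A := by
  rw [MeasureTheory.Measure.hausdorffMeasure_smul₀ hd (ne_of_gt hs) A]
  rw [ENNReal.smul_def, smul_eq_mul]
  congr 1
  rw [ENNReal.coe_rpow_of_nonneg _ hd, ← ENNReal.ofReal_rpow_of_pos hs,
    Real.nnnorm_of_nonneg hs.le]
  congr 1
  simp [ENNReal.ofReal, Real.toNNReal, hs.le]

lemma hyp_measure (m : ℕ) (v : E (m+1)) (hv : v ≠ 0) (Q : ℝ → Prop) (d : ℝ) (hd : 0 ≤ d) :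
    μH[d] {w : E (m+1) | (inner ℝ v w : ℝ) = 0 ∧ Q ‖w‖} = μH[d] {u : E m | Q ‖u‖} := by
  haveI : Fact (Module.finrank ℝ (E (m+1)) = m + 1) := ⟨finrank_euclideanSpace_fin⟩
  set b := OrthonormalBasis.fromOrthogonalSpanSingleton (𝕜 := ℝ) m hv
  set J : E m → E (m+1) := fun u => ((b.repr.symm u : (ℝ ∙ v)ᗮ) : E (m+1)) with hJ
  have hiso : Isometry J := by
    have h1 : Isometry ((ℝ ∙ v)ᗮ.subtypeₗᵢ : (ℝ ∙ v)ᗮ →ₗᵢ[ℝ] E (m+1)) :=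
      ((ℝ ∙ v)ᗮ.subtypeₗᵢ).isometry
    exact h1.comp b.repr.symm.isometry
  have himg : J '' {u : E m | Q ‖u‖} = {w : E (m+1) | (inner ℝ v w : ℝ) = 0 ∧ Q ‖w‖} := by
    ext w
    constructor
    · rintro ⟨u, hu, rfl⟩
      refine ⟨?_, ?_⟩
      · have := (b.repr.symm u).2
        rwa [Submodule.mem_orthogonal_singleton_iff_inner_right] at this
      · have : ‖J u‖ = ‖u‖ := by
          simp only [hJ]
          rw [Submodule.norm_coe]
          exact b.repr.symm.norm_map u
        rwa [this]
    · rintro ⟨h1, h2⟩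
      have hw : w ∈ (ℝ ∙ v)ᗮ := Submodule.mem_orthogonal_singleton_iff_inner_right.2 h1
      refine ⟨b.repr ⟨w, hw⟩, ?_, ?_⟩
      · have h3 : ‖b.repr ⟨w, hw⟩‖ = ‖w‖ := by
          rw [b.repr.norm_map ⟨w, hw⟩]; rfl
        show Q ‖b.repr ⟨w, hw⟩‖
        rwa [h3]
      · simp [hJ]
  rw [← himg, hiso.hausdorffMeasure_image (Or.inl hd)]

lemma haar_H (m : ℕ) : Measure.IsAddHaarMeasure (μH[(m:ℝ)] : Measure (E m)) := by
  have := MeasureTheory.isAddHaarMeasure_hausdorffMeasure (E := E m)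
  rwa [finrank_euclideanSpace_fin] at this

lemma annulus_pos (m : ℕ) (hm : 1 ≤ m) :
    0 < μH[(m:ℝ)] {u : E m | 1/2 < ‖u‖ ∧ ‖u‖ ≤ 3/4} := by
  haveI := haar_H m
  have hopen : IsOpen {u : E m | 1/2 < ‖u‖ ∧ ‖u‖ < 3/4} := by
    apply IsOpen.inter
    · exact isOpen_lt continuous_const continuous_norm
    · exact isOpen_lt continuous_norm continuous_const
  have hne : {u : E m | 1/2 < ‖u‖ ∧ ‖u‖ < 3/4}.Nonempty := by
    haveI : NeZero m := ⟨by omega⟩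
    refine ⟨EuclideanSpace.single (⟨0, by omega⟩ : Fin m) (5/8 : ℝ), ?_, ?_⟩ <;>
      simp [EuclideanSpace.norm_single] <;> norm_num
  calc (0:ℝ≥0∞) < μH[(m:ℝ)] {u : E m | 1/2 < ‖u‖ ∧ ‖u‖ < 3/4} :=
        hopen.measure_pos _ hne
    _ ≤ _ := by
        apply measure_mono
        intro u hu
        exact ⟨hu.1, hu.2.le⟩

lemma annulus_ne_top (m : ℕ) :
    μH[(m:ℝ)] {u : E m | 1/2 < ‖u‖ ∧ ‖u‖ ≤ 3/4} ≠ ∞ := by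
  haveI := haar_H m
  have h : {u : E m | 1/2 < ‖u‖ ∧ ‖u‖ ≤ 3/4} ⊆ closedBall 0 1 := by
    intro u hu
    simp only [mem_closedBall, dist_zero_right]
    linarith [hu.2]
  exact ((measure_mono h).trans_lt (isCompact_closedBall 0 1).measure_lt_top).ne

lemma ball_ne_top (m : ℕ) (R : ℝ) :
    μH[(m:ℝ)] (closedBall (0 : E m) R) ≠ ∞ := by
  haveI := haar_H m
  exact (isCompact_closedBall 0 R).measure_lt_top.ne

lemma normalize_lipschitz (n : ℕ) :
    LipschitzOnWith 2 (fun z : E n => ‖z‖⁻¹ • z) {z : E n | 1 ≤ ‖z‖} := by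
  rw [lipschitzOnWith_iff_dist_le_mul]
  intro a ha b hb
  simp only [Set.mem_setOf_eq] at ha hb
  have ha0 : (0:ℝ) < ‖a‖ := lt_of_lt_of_le one_pos ha
  have hb0 : (0:ℝ) < ‖b‖ := lt_of_lt_of_le one_pos hb
  rw [dist_eq_norm, dist_eq_norm]
  have key : ‖a‖⁻¹ • a - ‖b‖⁻¹ • b = ‖a‖⁻¹ • (a - b) + (‖a‖⁻¹ - ‖b‖⁻¹) • b := by
    rw [smul_sub, sub_smul]; abel
  rw [key]
  have h1 : ‖‖a‖⁻¹ • (a - b)‖ ≤ ‖a - b‖ := by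
    rw [norm_smul, Real.norm_eq_abs, abs_of_pos (inv_pos.2 ha0)]
    calc ‖a‖⁻¹ * ‖a - b‖ ≤ 1 * ‖a - b‖ := by
          apply mul_le_mul_of_nonneg_right _ (norm_nonneg _)
          rw [inv_le_one_iff₀]; right; exact ha
      _ = ‖a - b‖ := one_mul _
  have h2 : ‖(‖a‖⁻¹ - ‖b‖⁻¹) • b‖ ≤ ‖a - b‖ := by
    rw [norm_smul, Real.norm_eq_abs]
    have e1 : ‖a‖⁻¹ - ‖b‖⁻¹ = (‖b‖ - ‖a‖) / (‖a‖ * ‖b‖) := by field_simp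
    have e2 : |‖b‖ - ‖a‖| ≤ ‖a - b‖ := by
      rw [abs_sub_comm]; exact abs_norm_sub_norm_le a b
    rw [e1, abs_div, abs_of_pos (mul_pos ha0 hb0)]
    calc |‖b‖ - ‖a‖| / (‖a‖ * ‖b‖) * ‖b‖ = |‖b‖ - ‖a‖| / ‖a‖ := by field_simp
      _ ≤ |‖b‖ - ‖a‖| := div_le_self (abs_nonneg _) ha
      _ ≤ ‖a - b‖ := e2
  calc ‖‖a‖⁻¹ • (a - b) + (‖a‖⁻¹ - ‖b‖⁻¹) • b‖ ≤ ‖‖a‖⁻¹ • (a - b)‖ + ‖(‖a‖⁻¹ - ‖b‖⁻¹) • b‖ :=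
        norm_add_le _ _
    _ ≤ ‖a - b‖ + ‖a - b‖ := add_le_add h1 h2
    _ = 2 * ‖a - b‖ := by ring

lemma coord_le_norm {n : ℕ} (z : E n) (i : Fin n) : |z i| ≤ ‖z‖ := by
  have h := abs_real_inner_le_norm (EuclideanSpace.single i (1:ℝ)) z
  rw [EuclideanSpace.inner_single_left] at h
  simpa [EuclideanSpace.norm_single] using h

lemma inner_single_coord {n : ℕ} (i : Fin n) (z : E n) :
    (inner ℝ (EuclideanSpace.single i (1:ℝ)) z : ℝ) = z i := by
  rw [EuclideanSpace.inner_single_left]; simp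

lemma face_le (m : ℕ) (i : Fin (m+1)) (σ : ℝ) (hσ : σ = 1 ∨ σ = -1) (R : ℝ) (hR : 0 ≤ R) :
    μH[(m:ℝ)] {z : E (m+1) | z i = σ ∧ ‖z‖ ≤ R} ≤ μH[(m:ℝ)] (closedBall (0:E m) R) := by
  have hd : (0:ℝ) ≤ (m:ℝ) := Nat.cast_nonneg m
  have hσ2 : σ^2 = 1 := by rcases hσ with h | h <;> simp [h]
  set e : E (m+1) := EuclideanSpace.single i (1:ℝ) with hedef
  have he : ∀ z : E (m+1), (inner ℝ e z : ℝ) = z i := fun z => inner_single_coord i z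
  have hee : ‖e‖ = 1 := by simp [hedef, EuclideanSpace.norm_single]
  have hne : e ≠ 0 := by
    intro h
    rw [h] at hee; simp at hee
  have hsub : {z : E (m+1) | z i = σ ∧ ‖z‖ ≤ R} ⊆
      (fun w => w + σ • e) '' {w : E (m+1) | (inner ℝ e w : ℝ) = 0 ∧ ‖w‖ ≤ R} := by
    rintro z ⟨h1, h2⟩
    refine ⟨z - σ • e, ⟨?_, ?_⟩, by simp⟩
    · rw [inner_sub_right, he, real_inner_smul_right, real_inner_self_eq_norm_sq, hee]
      rw [h1]; ring
    · have hi : (inner ℝ z (σ • e) : ℝ) = σ * z i := by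
        rw [real_inner_smul_right, real_inner_comm, he]
      have hsq : ‖z - σ • e‖^2 = ‖z‖^2 - σ^2 := by
        rw [norm_sub_sq_real, hi, norm_smul, Real.norm_eq_abs, hee, h1]
        rw [mul_pow]; rw [sq_abs]; ring
      have h3 : ‖z - σ • e‖^2 ≤ R^2 := by
        rw [hsq, hσ2]
        nlinarith [norm_nonneg z]
      nlinarith [norm_nonneg (z - σ • e)]
  have hiso : Isometry (fun w : E (m+1) => w + σ • e) :=
    Isometry.of_dist_eq (fun a b => by simp [dist_eq_norm])
  calc μH[(m:ℝ)] {z : E (m+1) | z i = σ ∧ ‖z‖ ≤ R}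
      ≤ μH[(m:ℝ)] ((fun w => w + σ • e) '' {w : E (m+1) | (inner ℝ e w : ℝ) = 0 ∧ ‖w‖ ≤ R}) :=
        measure_mono hsub
    _ = μH[(m:ℝ)] {w : E (m+1) | (inner ℝ e w : ℝ) = 0 ∧ ‖w‖ ≤ R} :=
        hiso.hausdorffMeasure_image (Or.inl hd) _
    _ = μH[(m:ℝ)] {u : E m | ‖u‖ ≤ R} :=
        hyp_measure m e hne (fun t => t ≤ R) (m:ℝ) hd
    _ = μH[(m:ℝ)] (closedBall (0:E m) R) := by
        congr 1
        ext u
        simp [mem_closedBall, dist_zero_right]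

lemma sphere_cover (m : ℕ) (u : E (m+1)) (hu : ‖u‖ = 1) :
    ∃ z : E (m+1), (∃ i : Fin (m+1), (z i = 1 ∨ z i = -1) ∧ ‖z‖ ≤ Real.sqrt (m+1))
      ∧ ‖z‖⁻¹ • z = u := by
  have hsum : ∑ i, (u i)^2 = 1 := by
    have := EuclideanSpace.norm_eq u
    rw [hu] at this
    have h2 : Real.sqrt (∑ i, ‖u i‖^2) = 1 := this.symm
    have := Real.sqrt_eq_one.1 h2
    simpa [Real.norm_eq_abs, sq_abs] using this
  have hex : ∃ i : Fin (m+1), 1/(m+1) ≤ (u i)^2 := by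
    by_contra hcon
    push_neg at hcon
    have : ∑ i, (u i)^2 < ∑ _i : Fin (m+1), (1:ℝ)/(m+1) := by
      apply Finset.sum_lt_sum_of_nonempty
      · exact Finset.univ_nonempty
      · intro i _; exact hcon i
    rw [Finset.sum_const, Finset.card_univ, Fintype.card_fin] at this
    have hm1 : (0:ℝ) < (m:ℝ)+1 := by positivity
    rw [nsmul_eq_mul] at this
    push_cast at this
    rw [mul_one_div, div_self (ne_of_gt hm1)] at this
    rw [hsum] at this
    exact lt_irrefl _ this
  obtain ⟨i, hi⟩ := hex
  set t := u i with ht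
  have ht0 : t ≠ 0 := by
    intro h
    rw [h] at hi
    simp at hi
    have : (0:ℝ) < 1/(m+1) := by positivity
    linarith
  have htabs : 0 < |t| := abs_pos.2 ht0
  refine ⟨|t|⁻¹ • u, ⟨i, ?_, ?_⟩, ?_⟩
  · show (|t|⁻¹ * t = 1 ∨ |t|⁻¹ * t = -1)
    rcases lt_or_gt_of_ne ht0 with h | h
    · right; rw [abs_of_neg h]; field_simp
    · left; rw [abs_of_pos h]; field_simp
  · rw [norm_smul, Real.norm_eq_abs, abs_inv, abs_abs, hu, mul_one]
    rw [inv_le_comm₀ htabs (by positivity)]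
    have h1 : (Real.sqrt ((m:ℝ)+1))⁻¹ = Real.sqrt (1/((m:ℝ)+1)) := by
      rw [one_div, Real.sqrt_inv]
    rw [h1]
    have := Real.sqrt_le_sqrt hi
    rwa [Real.sqrt_sq_eq_abs] at this
  · rw [norm_smul, Real.norm_eq_abs, abs_inv, abs_abs, hu, mul_one, inv_inv]
    rw [smul_smul]
    rw [mul_inv_cancel₀ (ne_of_gt htabs), one_smul]

lemma sphere_finite (m : ℕ) : μH[(m:ℝ)] (sphere (0 : E (m+1)) 1) ≠ ∞ := by
  have hd : (0:ℝ) ≤ (m:ℝ) := Nat.cast_nonneg m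
  set R : ℝ := Real.sqrt (m+1) with hRdef
  set B : Set (E (m+1)) := ⋃ i : Fin (m+1),
    ({z : E (m+1) | z i = 1 ∧ ‖z‖ ≤ R} ∪ {z : E (m+1) | z i = -1 ∧ ‖z‖ ≤ R}) with hBdef
  have hB1 : B ⊆ {z : E (m+1) | 1 ≤ ‖z‖} := by
    intro z hz
    simp only [hBdef, Set.mem_iUnion, Set.mem_union] at hz
    obtain ⟨i, hz⟩ := hz
    have : |z i| = 1 := by
      rcases hz with ⟨h, _⟩ | ⟨h, _⟩ <;> rw [h] <;> simp
    have := coord_le_norm z i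
    rw [‹|z i| = 1›] at this
    exact this
  have hcov : sphere (0 : E (m+1)) 1 ⊆ (fun z : E (m+1) => ‖z‖⁻¹ • z) '' B := by
    intro u hu
    have hu1 : ‖u‖ = 1 := by simpa using hu
    obtain ⟨z, ⟨i, hzi, hzR⟩, hgz⟩ := sphere_cover m u hu1
    refine ⟨z, ?_, hgz⟩
    simp only [hBdef, Set.mem_iUnion, Set.mem_union]
    exact ⟨i, by rcases hzi with h | h; exacts [Or.inl ⟨h, hzR⟩, Or.inr ⟨h, hzR⟩]⟩
  have hBfin : μH[(m:ℝ)] B ≠ ∞ := by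
    have hle : μH[(m:ℝ)] B ≤ ∑ i : Fin (m+1),
        (μH[(m:ℝ)] {z : E (m+1) | z i = 1 ∧ ‖z‖ ≤ R}
          + μH[(m:ℝ)] {z : E (m+1) | z i = -1 ∧ ‖z‖ ≤ R}) := by
      refine le_trans (measure_iUnion_le _) ?_
      rw [tsum_fintype]
      exact Finset.sum_le_sum (fun i _ => measure_union_le _ _)
    have hball := ball_ne_top m R
    have : ∀ i : Fin (m+1),
        μH[(m:ℝ)] {z : E (m+1) | z i = 1 ∧ ‖z‖ ≤ R}
          + μH[(m:ℝ)] {z : E (m+1) | z i = -1 ∧ ‖z‖ ≤ R} ≠ ∞ := by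
      intro i
      have h1 := face_le m i 1 (Or.inl rfl) R (Real.sqrt_nonneg _)
      have h2 := face_le m i (-1) (Or.inr rfl) R (Real.sqrt_nonneg _)
      exact ENNReal.add_ne_top.2 ⟨ne_top_of_le_ne_top hball h1, ne_top_of_le_ne_top hball h2⟩
    exact ne_top_of_le_ne_top (by
      rw [← lt_top_iff_ne_top]
      exact ENNReal.sum_lt_top.2 (fun i _ => lt_top_iff_ne_top.2 (this i))) hle
  have hlip : LipschitzOnWith 2 (fun z : E (m+1) => ‖z‖⁻¹ • z) B :=
    (normalize_lipschitz (m+1)).mono hB1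
  have hchain : μH[(m:ℝ)] (sphere (0 : E (m+1)) 1) ≤ ((2:ℝ≥0):ℝ≥0∞)^(m:ℝ) * μH[(m:ℝ)] B :=
    le_trans (measure_mono hcov) (hlip.hausdorffMeasure_image_le hd)
  exact ne_top_of_le_ne_top (ENNReal.mul_ne_top
    (ENNReal.rpow_lt_top_of_nonneg hd ENNReal.coe_ne_top).ne hBfin) hchain

set_option maxHeartbeats 1000000 in
lemma cap_lower (m : ℕ) (x : E (m+1)) (hx : x ≠ 0) (a b : ℝ) (ha : 0 < a)
    (hab : a < (3/4)*b) (hbr : b ≤ ‖x‖) :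
    μH[(m:ℝ)] {u : E m | a < ‖u‖ ∧ ‖u‖ ≤ (3/4)*b}
      ≤ μH[(m:ℝ)] {z : E (m+1) | z ∈ sphere x ‖x‖ ∧ a < ‖z‖ ∧ ‖z‖ ≤ b} := by
  have hd : (0:ℝ) ≤ (m:ℝ) := Nat.cast_nonneg m
  set r : ℝ := ‖x‖ with hrdef
  have hr : 0 < r := norm_pos_iff.2 hx
  have hb : 0 < b := by nlinarith
  set xh : E (m+1) := r⁻¹ • x with hxhdef
  have hxh : ‖xh‖ = 1 := by
    rw [hxhdef, norm_smul, Real.norm_eq_abs, abs_inv, abs_of_pos hr, ← hrdef]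
    field_simp
  have hxhne : xh ≠ 0 := by
    intro h; rw [h] at hxh; simp at hxh
  have hxeq : x = r • xh := by
    rw [hxhdef, smul_smul, mul_inv_cancel₀ (ne_of_gt hr), one_smul]
  set proj : E (m+1) → E (m+1) := fun z => z - (inner ℝ xh z : ℝ) • xh with hprojdef
  have hprojnorm : ∀ w : E (m+1), ‖proj w‖ ≤ ‖w‖ := by
    intro w
    have hsq : ‖proj w‖^2 = ‖w‖^2 - (inner ℝ xh w : ℝ)^2 := by
      rw [hprojdef]
      simp only
      rw [norm_sub_sq_real, real_inner_smul_right, norm_smul, Real.norm_eq_abs,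
        hxh, mul_one, real_inner_comm w xh]
      rw [sq_abs]; ring
    nlinarith [norm_nonneg (proj w), norm_nonneg w, sq_nonneg (inner ℝ xh w : ℝ)]
  have hlip : LipschitzWith 1 proj := by
    apply LipschitzWith.of_dist_le_mul
    intro z z'
    rw [dist_eq_norm, dist_eq_norm, NNReal.coe_one, one_mul]
    have : proj z - proj z' = proj (z - z') := by
      rw [hprojdef]; simp only [inner_sub_right]
      rw [sub_smul]; abel
    rw [this]
    exact hprojnorm _
  have hsub : {w : E (m+1) | (inner ℝ xh w : ℝ) = 0 ∧ a < ‖w‖ ∧ ‖w‖ ≤ (3/4)*b} ⊆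
      proj '' {z : E (m+1) | z ∈ sphere x r ∧ a < ‖z‖ ∧ ‖z‖ ≤ b} := by
    rintro w ⟨hw0, hwa, hwb⟩
    have hwb' : ‖w‖ ≤ (3/4)*r := le_trans hwb (by linarith)
    have hw0' : (inner ℝ w xh : ℝ) = 0 := by rw [real_inner_comm]; exact hw0
    have hwnn : 0 ≤ ‖w‖ := norm_nonneg w
    have hrw : 0 ≤ r^2 - ‖w‖^2 := by nlinarith
    set sq : ℝ := Real.sqrt (r^2 - ‖w‖^2) with hsqdef
    have hsqnn : 0 ≤ sq := Real.sqrt_nonneg _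
    have hsq2 : sq^2 = r^2 - ‖w‖^2 := Real.sq_sqrt hrw
    set t : ℝ := r - sq with htdef
    have htnn : 0 ≤ t := by
      have : sq ≤ Real.sqrt (r^2) := Real.sqrt_le_sqrt (by nlinarith)
      rw [Real.sqrt_sq hr.le] at this
      linarith
    have ht34 : t ≤ (3/4)*‖w‖ := by
      have h1 : t*(r+sq) = ‖w‖^2 := by rw [htdef]; nlinarith [hsq2]
      have h2 : ‖w‖^2 ≤ (3/4)*‖w‖*(r+sq) := by nlinarith
      have h3 : 0 < r + sq := by linarith
      have := h1.trans_le h2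
      exact le_of_mul_le_mul_right this h3
    set z : E (m+1) := w + t • xh with hzdef
    have hinner : ∀ s : ℝ, (inner ℝ w (s • xh) : ℝ) = 0 := by
      intro s; rw [real_inner_smul_right, hw0']; ring
    have hnormz : ∀ s : ℝ, ‖w + s • xh‖^2 = ‖w‖^2 + s^2 := by
      intro s
      rw [norm_add_sq_real, hinner, norm_smul, Real.norm_eq_abs, hxh, mul_one, sq_abs]
      ring
    have hzsq : ‖z‖^2 = ‖w‖^2 + t^2 := hnormz t
    refine ⟨z, ⟨?_, ?_, ?_⟩, ?_⟩
    · rw [mem_sphere_iff_norm]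
      have hzx : z - x = w + (t - r) • xh := by
        rw [hzdef, hxeq]; module
      have : ‖z - x‖^2 = r^2 := by
        rw [hzx, hnormz]
        have : (t - r)^2 = sq^2 := by rw [htdef]; ring
        rw [this, hsq2]; ring
      have h5 : ‖z - x‖ = Real.sqrt (r^2) := by
        rw [← this, Real.sqrt_sq (norm_nonneg _)]
      rw [h5, Real.sqrt_sq hr.le]
    · have : ‖w‖ ≤ ‖z‖ := by
        have h6 : ‖w‖^2 ≤ ‖z‖^2 := by nlinarith
        have := Real.sqrt_le_sqrt h6
        rwa [Real.sqrt_sq hwnn, Real.sqrt_sq (norm_nonneg z)] at this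
      linarith
    · have h7 : ‖z‖^2 ≤ ((15/16)*b)^2 := by nlinarith [hzsq, ht34, hwb, htnn, hwnn, hb, sq_nonneg t]
      have h8 := Real.sqrt_le_sqrt h7
      rw [Real.sqrt_sq (norm_nonneg z), Real.sqrt_sq (by linarith : (0:ℝ) ≤ (15/16)*b)] at h8
      linarith
    · rw [hprojdef]
      simp only [hzdef]
      rw [inner_add_right, hw0, real_inner_smul_right, real_inner_self_eq_norm_sq, hxh]
      simp
  calc μH[(m:ℝ)] {u : E m | a < ‖u‖ ∧ ‖u‖ ≤ (3/4)*b}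
      = μH[(m:ℝ)] {w : E (m+1) | (inner ℝ xh w : ℝ) = 0 ∧ a < ‖w‖ ∧ ‖w‖ ≤ (3/4)*b} :=
        (hyp_measure m xh hxhne (fun s => a < s ∧ s ≤ (3/4)*b) (m:ℝ) hd).symm
    _ ≤ μH[(m:ℝ)] (proj '' {z : E (m+1) | z ∈ sphere x r ∧ a < ‖z‖ ∧ ‖z‖ ≤ b}) :=
        measure_mono hsub
    _ ≤ ((1:ℝ≥0):ℝ≥0∞)^(m:ℝ) * μH[(m:ℝ)] {z : E (m+1) | z ∈ sphere x r ∧ a < ‖z‖ ∧ ‖z‖ ≤ b} :=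
        hlip.hausdorffMeasure_image_le hd _
    _ = μH[(m:ℝ)] {z : E (m+1) | z ∈ sphere x r ∧ a < ‖z‖ ∧ ‖z‖ ≤ b} := by
        rw [ENNReal.coe_one, ENNReal.one_rpow, one_mul]

lemma sphere_meas_upper (m : ℕ) (x : E (m+1)) (hx : 0 < ‖x‖) :
    μH[(m:ℝ)] (sphere x ‖x‖) ≤ ENNReal.ofReal (‖x‖^(m:ℝ)) * μH[(m:ℝ)] (sphere (0:E (m+1)) 1) := by
  have hd : (0:ℝ) ≤ (m:ℝ) := Nat.cast_nonneg m
  set r : ℝ := ‖x‖ with hrdef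
  have himg : sphere x r = (fun z : E (m+1) => x + r • z) '' sphere (0:E (m+1)) 1 := by
    ext z
    simp only [mem_sphere_iff_norm, Set.mem_image, sub_zero]
    constructor
    · intro h
      refine ⟨r⁻¹ • (z - x), ?_, ?_⟩
      · rw [norm_smul, Real.norm_eq_abs, abs_inv, abs_of_pos hx, h]
        field_simp
      · rw [smul_smul, mul_inv_cancel₀ (ne_of_gt hx), one_smul]
        abel
    · rintro ⟨u, hu, rfl⟩
      rw [add_sub_cancel_left, norm_smul, Real.norm_eq_abs, abs_of_pos hx, hu, mul_one]
  have hlip : LipschitzWith r.toNNReal (fun z : E (m+1) => x + r • z) := by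
    apply LipschitzWith.of_dist_le_mul
    intro z z'
    rw [dist_eq_norm, dist_eq_norm]
    have : x + r • z - (x + r • z') = r • (z - z') := by rw [smul_sub]; abel
    rw [this, norm_smul, Real.norm_eq_abs, abs_of_pos hx]
    rw [Real.coe_toNNReal _ hx.le]
  calc μH[(m:ℝ)] (sphere x r)
      = μH[(m:ℝ)] ((fun z : E (m+1) => x + r • z) '' sphere (0:E (m+1)) 1) := by rw [himg]
    _ ≤ ((r.toNNReal : ℝ≥0∞))^(m:ℝ) * μH[(m:ℝ)] (sphere (0:E (m+1)) 1) :=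
        hlip.hausdorffMeasure_image_le hd _
    _ = ENNReal.ofReal (r^(m:ℝ)) * μH[(m:ℝ)] (sphere (0:E (m+1)) 1) := by
        congr 1
        rw [← ENNReal.ofReal_rpow_of_pos hx]
        rfl

set_option maxHeartbeats 1000000 in
lemma integral_lower (m : ℕ) (x : E (m+1)) (hx : 0 < ‖x‖) (hx2 : ‖x‖ ≤ 1/2) :
    ENNReal.ofReal ((Real.log (Real.exp 1 / ‖x‖)) ^ (-((((m+1:ℕ):ℝ) - 1) / ((m+1:ℕ):ℝ))) / 8)
        * μH[(m:ℝ)] {u : E m | 1/2 < ‖u‖ ∧ ‖u‖ ≤ 3/4}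
      ≤ ∫⁻ z in sphere x ‖x‖, ENNReal.ofReal (exampleFun (m+1) z) ∂μH[(m:ℝ)] := by
  set r : ℝ := ‖x‖ with hrdef
  have hxne : x ≠ 0 := by
    intro h
    rw [hrdef, h, norm_zero] at hx
    exact lt_irrefl 0 hx
  set θ : ℝ := (((m+1:ℕ):ℝ) - 1) / ((m+1:ℕ):ℝ) with hθdef
  have hθ0 : 0 ≤ θ := by
    apply div_nonneg
    · push_cast; linarith [Nat.cast_nonneg (α := ℝ) m]
    · positivity
  have hθ1 : θ ≤ 1 := by
    rw [hθdef, div_le_one (by positivity)]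
    linarith
  set L : ℝ := Real.log (Real.exp 1 / r) with hLdef
  have hLeq : L = 1 - Real.log r := by
    rw [hLdef, Real.log_div (Real.exp_ne_zero 1) (ne_of_gt hx), Real.log_exp]
  have hlogr : Real.log r ≤ 0 := Real.log_nonpos hx.le (by linarith)
  have hL1 : 1 ≤ L := by rw [hLeq]; linarith
  have hL0 : 0 < L := lt_of_lt_of_le one_pos hL1
  set K : ℕ := ⌊L⌋₊ with hKdef
  have hK1 : 1 ≤ K := by
    rw [hKdef]
    exact_mod_cast Nat.le_floor (by exact_mod_cast hL1)
  have hKL : (K:ℝ) ≤ L := Nat.floor_le hL0.le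
  have hLK : L ≤ 2*K := by
    rcases le_or_gt L 2 with h | h
    · have : (1:ℝ) ≤ (K:ℝ) := by exact_mod_cast hK1
      linarith
    · have := Nat.lt_floor_add_one L
      rw [← hKdef] at this
      linarith
  -- dyadic radii
  set b : ℕ → ℝ := fun k => r * (1/2:ℝ)^k with hbdef
  have hbpos : ∀ k, 0 < b k := fun k => by positivity
  have hbsucc : ∀ k, b (k+1) = b k / 2 := by
    intro k
    rw [hbdef]
    simp only
    rw [pow_succ]
    ring
  have hble : ∀ k, b k ≤ r := by
    intro k
    rw [hbdef]
    simp only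
    calc r * (1/2:ℝ)^k ≤ r * 1 := by
          apply mul_le_mul_of_nonneg_left _ hx.le
          exact pow_le_one₀ (by norm_num) (by norm_num)
      _ = r := mul_one r
  have hbanti : ∀ i j : ℕ, i ≤ j → b j ≤ b i := by
    intro i j hij
    apply mul_le_mul_of_nonneg_left _ hx.le
    exact pow_le_pow_of_le_one (by norm_num) (by norm_num) hij
  -- the annular pieces of the sphere
  set A : ℕ → Set (E (m+1)) :=
    fun k => {z : E (m+1) | z ∈ sphere x r ∧ b (k+1) < ‖z‖ ∧ ‖z‖ ≤ b k} with hAdef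
  have hAmeas : ∀ k, MeasurableSet (A k) := by
    intro k
    have : A k = sphere x r ∩ ({z : E (m+1) | b (k+1) < ‖z‖} ∩ {z : E (m+1) | ‖z‖ ≤ b k}) := by
      ext z; simp [hAdef, and_assoc]
    rw [this]
    exact (Metric.isClosed_sphere.measurableSet).inter
      ((isOpen_lt continuous_const continuous_norm).measurableSet.inter
        (isClosed_le continuous_norm continuous_const).measurableSet)
  have hAsub : ∀ k, A k ⊆ sphere x r := fun k z hz => hz.1
  have hdisj' : ∀ i j : ℕ, i < j → Disjoint (A i) (A j) := by
    intro i j hij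
    rw [Set.disjoint_left]
    rintro z ⟨_, hz1, _⟩ ⟨_, _, hz2⟩
    have : b j ≤ b (i+1) := hbanti _ _ (by omega)
    linarith
  have hdisj : Set.PairwiseDisjoint (↑(Finset.range K) : Set ℕ) A := by
    intro i _ j _ hij
    rcases lt_or_gt_of_ne hij with h | h
    · exact hdisj' i j h
    · exact (hdisj' j i h).symm
  -- pointwise lower bound for exampleFun on A k
  have hf : ∀ k, k + 1 ≤ K → ∀ z ∈ A k,
      ENNReal.ofReal ((b k) ^ ((1:ℝ) - ((m+1:ℕ):ℝ)) * (2*L) ^ (-1 - θ))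
        ≤ ENNReal.ofReal (exampleFun (m+1) z) := by
    rintro k hk z ⟨hzs, hz1, hz2⟩
    apply ENNReal.ofReal_le_ofReal
    have hz0 : 0 < ‖z‖ := lt_trans (hbpos (k+1)) hz1
    have hzle1 : ‖z‖ ≤ 1 := by
      have := hble k; linarith
    rw [exampleFun, if_pos ⟨hz0, hzle1⟩]
    have hfac1 : (b k) ^ ((1:ℝ) - ((m+1:ℕ):ℝ)) ≤ ‖z‖ ^ ((1:ℝ) - ((m+1:ℕ):ℝ)) := by
      apply Real.rpow_le_rpow_of_nonpos hz0 hz2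
      push_cast
      linarith [Nat.cast_nonneg (α := ℝ) m]
    have hlz : 0 < Real.log (Real.exp 1 / ‖z‖) := by
      apply Real.log_pos
      rw [lt_div_iff₀ hz0, one_mul]
      calc ‖z‖ ≤ 1 := hzle1
        _ < Real.exp 1 := by
          have := Real.exp_one_gt_d9; linarith
    have hlz2 : Real.log (Real.exp 1 / ‖z‖) ≤ 2*L := by
      have e1 : Real.log (Real.exp 1 / ‖z‖) = 1 - Real.log ‖z‖ := by
        rw [Real.log_div (Real.exp_ne_zero 1) (ne_of_gt hz0), Real.log_exp]
      have e2 : Real.log (b (k+1)) ≤ Real.log ‖z‖ := Real.log_le_log (hbpos (k+1)) hz1.le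
      have e3 : Real.log (b (k+1)) = Real.log r - ((k:ℝ)+1) * Real.log 2 := by
        rw [hbdef]
        simp only
        rw [Real.log_mul (ne_of_gt hx) (by positivity), Real.log_pow]
        have : Real.log ((1:ℝ)/2) = -Real.log 2 := by
          rw [one_div, Real.log_inv]
        rw [this]
        push_cast
        ring
      have e4 : ((k:ℝ)+1) * Real.log 2 ≤ L := by
        have h5 : ((k:ℝ)+1) ≤ (K:ℝ) := by exact_mod_cast hk
        have h6 : Real.log 2 ≤ 1 := by
          have := Real.log_two_lt_d9; linarith
        have h7 : 0 ≤ Real.log 2 := Real.log_nonneg (by norm_num)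
        calc ((k:ℝ)+1) * Real.log 2 ≤ (K:ℝ) * 1 :=
              mul_le_mul h5 h6 h7 (by positivity)
          _ ≤ L := by rw [mul_one]; exact hKL
      rw [e1]
      have : Real.log r - ((k:ℝ)+1) * Real.log 2 ≤ Real.log ‖z‖ := by
        rw [← e3]; exact e2
      rw [hLeq] at e4 ⊢
      linarith
    have hfac2 : (2*L) ^ (-1 - θ) ≤ (Real.log (Real.exp 1 / ‖z‖)) ^ (-1 - θ) := by
      apply Real.rpow_le_rpow_of_nonpos hlz hlz2
      linarith
    exact mul_le_mul hfac1 hfac2 (Real.rpow_nonneg (by linarith) _)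
      (Real.rpow_nonneg hz0.le _)
  -- measure lower bound for A k
  have hmeask : ∀ k, ENNReal.ofReal ((b k) ^ (m:ℝ))
      * μH[(m:ℝ)] {u : E m | 1/2 < ‖u‖ ∧ ‖u‖ ≤ 3/4} ≤ μH[(m:ℝ)] (A k) := by
    intro k
    have hbk := hbpos k
    have hset : {u : E m | b (k+1) < ‖u‖ ∧ ‖u‖ ≤ (3/4) * b k}
        = b k • {u : E m | 1/2 < ‖u‖ ∧ ‖u‖ ≤ 3/4} := by
      ext u
      rw [Set.mem_smul_set_iff_inv_smul_mem₀ (ne_of_gt hbk)]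
      simp only [Set.mem_setOf_eq, norm_smul, Real.norm_eq_abs, abs_inv, abs_of_pos hbk,
        inv_mul_eq_div]
      rw [lt_div_iff₀ hbk, div_le_iff₀ hbk, hbsucc k]
      constructor
      · rintro ⟨h1, h2⟩; exact ⟨by linarith, by linarith⟩
      · rintro ⟨h1, h2⟩; exact ⟨by linarith, by linarith⟩
    have hcap := cap_lower m x hxne (b (k+1)) (b k) (hbpos (k+1))
      (by rw [hbsucc k]; linarith [hbpos k]) (hble k)
    rw [hset] at hcap
    rw [smul_scaling m (b k) hbk _ (m:ℝ) (Nat.cast_nonneg m)] at hcap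
    exact hcap
  -- per-piece integral bound
  have hper : ∀ k, k + 1 ≤ K →
      ENNReal.ofReal ((2*L) ^ (-1 - θ)) * μH[(m:ℝ)] {u : E m | 1/2 < ‖u‖ ∧ ‖u‖ ≤ 3/4}
        ≤ ∫⁻ z in A k, ENNReal.ofReal (exampleFun (m+1) z) ∂μH[(m:ℝ)] := by
    intro k hk
    have hbk := hbpos k
    have hkey : ENNReal.ofReal ((2*L) ^ (-1 - θ))
        = ENNReal.ofReal ((b k) ^ ((1:ℝ) - ((m+1:ℕ):ℝ)) * (2*L) ^ (-1 - θ))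
          * ENNReal.ofReal ((b k) ^ (m:ℝ)) := by
      rw [← ENNReal.ofReal_mul (by positivity)]
      congr 1
      rw [mul_comm ((b k) ^ ((1:ℝ) - ((m+1:ℕ):ℝ))) _, mul_assoc,
        ← Real.rpow_add hbk]
      have : (1:ℝ) - ((m+1:ℕ):ℝ) + (m:ℝ) = 0 := by push_cast; ring
      rw [this, Real.rpow_zero, mul_one]
    calc ENNReal.ofReal ((2*L) ^ (-1 - θ)) * μH[(m:ℝ)] {u : E m | 1/2 < ‖u‖ ∧ ‖u‖ ≤ 3/4}
        = ENNReal.ofReal ((b k) ^ ((1:ℝ) - ((m+1:ℕ):ℝ)) * (2*L) ^ (-1 - θ))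
          * (ENNReal.ofReal ((b k) ^ (m:ℝ))
            * μH[(m:ℝ)] {u : E m | 1/2 < ‖u‖ ∧ ‖u‖ ≤ 3/4}) := by
          rw [hkey, mul_assoc]
      _ ≤ ENNReal.ofReal ((b k) ^ ((1:ℝ) - ((m+1:ℕ):ℝ)) * (2*L) ^ (-1 - θ))
          * μH[(m:ℝ)] (A k) := by
          exact mul_le_mul_right (hmeask k) _
      _ = ∫⁻ _ in A k, ENNReal.ofReal ((b k) ^ ((1:ℝ) - ((m+1:ℕ):ℝ)) * (2*L) ^ (-1 - θ))
            ∂μH[(m:ℝ)] := (setLIntegral_const _ _).symm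
      _ ≤ ∫⁻ z in A k, ENNReal.ofReal (exampleFun (m+1) z) ∂μH[(m:ℝ)] := by
          apply setLIntegral_mono' (hAmeas k)
          intro z hz
          exact hf k hk z hz
  -- sum up
  have hsum : (K : ℝ≥0∞) * (ENNReal.ofReal ((2*L) ^ (-1 - θ))
        * μH[(m:ℝ)] {u : E m | 1/2 < ‖u‖ ∧ ‖u‖ ≤ 3/4})
      ≤ ∫⁻ z in sphere x r, ENNReal.ofReal (exampleFun (m+1) z) ∂μH[(m:ℝ)] := by
    have h1 : ∫⁻ z in ⋃ k ∈ Finset.range K, A k,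
        ENNReal.ofReal (exampleFun (m+1) z) ∂μH[(m:ℝ)]
        ≤ ∫⁻ z in sphere x r, ENNReal.ofReal (exampleFun (m+1) z) ∂μH[(m:ℝ)] := by
      apply lintegral_mono_set
      intro z hz
      simp only [Set.mem_iUnion] at hz
      obtain ⟨k, _, hk⟩ := hz
      exact hAsub k hk
    have h2 : ∫⁻ z in ⋃ k ∈ Finset.range K, A k,
        ENNReal.ofReal (exampleFun (m+1) z) ∂μH[(m:ℝ)]
        = ∑ k ∈ Finset.range K, ∫⁻ z in A k,
            ENNReal.ofReal (exampleFun (m+1) z) ∂μH[(m:ℝ)] :=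
      lintegral_biUnion_finset hdisj (fun k _ => hAmeas k) _
    have h3 : (K : ℝ≥0∞) * (ENNReal.ofReal ((2*L) ^ (-1 - θ))
          * μH[(m:ℝ)] {u : E m | 1/2 < ‖u‖ ∧ ‖u‖ ≤ 3/4})
        ≤ ∑ k ∈ Finset.range K, ∫⁻ z in A k,
            ENNReal.ofReal (exampleFun (m+1) z) ∂μH[(m:ℝ)] := by
      have := Finset.sum_le_sum (f := fun _ : ℕ => ENNReal.ofReal ((2*L) ^ (-1 - θ))
          * μH[(m:ℝ)] {u : E m | 1/2 < ‖u‖ ∧ ‖u‖ ≤ 3/4})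
        (g := fun k => ∫⁻ z in A k, ENNReal.ofReal (exampleFun (m+1) z) ∂μH[(m:ℝ)])
        (s := Finset.range K) (fun k hk => hper k (Finset.mem_range.1 hk))
      rwa [Finset.sum_const, Finset.card_range, nsmul_eq_mul] at this
    calc (K : ℝ≥0∞) * _ ≤ _ := h3
      _ = _ := h2.symm
      _ ≤ _ := h1
  -- conclude with the real arithmetic
  have hreal : L ^ (-θ) / 8 ≤ (K:ℝ) * ((2*L) ^ (-1 - θ)) := by
    have hq : (2*L) ^ ((-1:ℝ) - θ) = 2 ^ (-θ) * L ^ (-θ) * (2*L)⁻¹ := by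
      rw [show ((-1:ℝ) - θ) = -θ + (-1) by ring, Real.rpow_add (by positivity),
        Real.rpow_neg_one, Real.mul_rpow (by norm_num) hL0.le]
    have h2θ : (1/2:ℝ) ≤ 2 ^ (-θ) := by
      calc (1/2:ℝ) = 2 ^ (-1:ℝ) := by rw [Real.rpow_neg_one]; norm_num
        _ ≤ 2 ^ (-θ) := Real.rpow_le_rpow_of_exponent_le one_le_two (by linarith)
    have hP : 0 < L ^ (-θ) := Real.rpow_pos_of_pos hL0 _
    have hKL2 : L/2 ≤ (K:ℝ) := by linarith
    rw [hq]
    calc L ^ (-θ) / 8 = (L/2) * ((1/2) * L ^ (-θ) * (2*L)⁻¹) := by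
          field_simp
          ring
      _ ≤ (K:ℝ) * ((1/2) * L ^ (-θ) * (2*L)⁻¹) :=
          mul_le_mul_of_nonneg_right hKL2 (by positivity)
      _ ≤ (K:ℝ) * (2 ^ (-θ) * L ^ (-θ) * (2*L)⁻¹) := by
          apply mul_le_mul_of_nonneg_left _ (Nat.cast_nonneg K)
          apply mul_le_mul_of_nonneg_right _ (by positivity)
          exact mul_le_mul_of_nonneg_right h2θ hP.le
  calc ENNReal.ofReal (L ^ (-θ) / 8) * μH[(m:ℝ)] {u : E m | 1/2 < ‖u‖ ∧ ‖u‖ ≤ 3/4}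
      ≤ ENNReal.ofReal ((K:ℝ) * ((2*L) ^ (-1 - θ)))
        * μH[(m:ℝ)] {u : E m | 1/2 < ‖u‖ ∧ ‖u‖ ≤ 3/4} :=
        mul_le_mul_left (ENNReal.ofReal_le_ofReal hreal) _
    _ = (K:ℝ≥0∞) * (ENNReal.ofReal ((2*L) ^ (-1 - θ))
        * μH[(m:ℝ)] {u : E m | 1/2 < ‖u‖ ∧ ‖u‖ ≤ 3/4}) := by
        rw [ENNReal.ofReal_mul (Nat.cast_nonneg K), ENNReal.ofReal_natCast, mul_assoc]
    _ ≤ _ := hsum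

/-- for `0 < |x| ≤ 1/2`, the average of `f` over the sphere `S^{n-1}(x,|x|)`
is at least `c(n) |x|^{1-n} (log(e/|x|))^{-(n-1)/n}`. -/
theorem statement14 (n : ℕ) (hn : 2 ≤ n) :
    ∃ c : ℝ, 0 < c ∧
      ∀ x : EuclideanSpace ℝ (Fin n), 0 < ‖x‖ → ‖x‖ ≤ 1 / 2 →
        ENNReal.ofReal
            (c * ‖x‖ ^ ((1 : ℝ) - n) *
              (Real.log (Real.exp 1 / ‖x‖)) ^ (-(((n : ℝ) - 1) / n))) ≤
          (μH[(n : ℝ) - 1] (sphere x ‖x‖))⁻¹ *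
            ∫⁻ z in sphere x ‖x‖, ENNReal.ofReal (exampleFun n z) ∂(μH[(n : ℝ) - 1]) := by
  obtain ⟨m, rfl⟩ : ∃ m, n = m + 1 := ⟨n - 1, by omega⟩
  have hm : 1 ≤ m := by omega
  have hdrw : ((m+1:ℕ):ℝ) - 1 = (m:ℝ) := by push_cast; ring
  have hγ0 : 0 < μH[(m:ℝ)] {u : E m | 1/2 < ‖u‖ ∧ ‖u‖ ≤ 3/4} := annulus_pos m hm
  have hγtop := annulus_ne_top m
  have hΓtop := sphere_finite m
  set G : ℝ := (μH[(m:ℝ)] {u : E m | 1/2 < ‖u‖ ∧ ‖u‖ ≤ 3/4}).toReal with hGdef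
  set B : ℝ := (μH[(m:ℝ)] (sphere (0:E (m+1)) 1)).toReal with hBdef
  have hG0 : 0 < G := ENNReal.toReal_pos (ne_of_gt hγ0) hγtop
  have hB0 : 0 ≤ B := ENNReal.toReal_nonneg
  refine ⟨G / (8 * (B + 1)), by positivity, ?_⟩
  intro x hx hx2
  rw [hdrw]
  have hlow := integral_lower m x hx hx2
  rw [hdrw] at hlow
  have hup := sphere_meas_upper m x hx
  have hrm : (0:ℝ) < ‖x‖ ^ (m:ℝ) := Real.rpow_pos_of_pos hx _
  have h1 : μH[(m:ℝ)] (sphere x ‖x‖) ≤ ENNReal.ofReal (‖x‖ ^ (m:ℝ) * (B + 1)) := by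
    calc μH[(m:ℝ)] (sphere x ‖x‖)
        ≤ ENNReal.ofReal (‖x‖^(m:ℝ)) * μH[(m:ℝ)] (sphere (0:E (m+1)) 1) := hup
      _ ≤ ENNReal.ofReal (‖x‖^(m:ℝ)) * ENNReal.ofReal (B + 1) := by
          apply mul_le_mul_right
          rw [← ENNReal.ofReal_toReal hΓtop, ← hBdef]
          exact ENNReal.ofReal_le_ofReal (by linarith)
      _ = ENNReal.ofReal (‖x‖ ^ (m:ℝ) * (B + 1)) :=
          (ENNReal.ofReal_mul (Real.rpow_nonneg hx.le _)).symm
  have h2 : (ENNReal.ofReal (‖x‖ ^ (m:ℝ) * (B + 1)))⁻¹ ≤ (μH[(m:ℝ)] (sphere x ‖x‖))⁻¹ :=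
    ENNReal.inv_le_inv' h1
  set P : ℝ := (Real.log (Real.exp 1 / ‖x‖)) ^ (-((m:ℝ) / ((m+1:ℕ):ℝ))) with hPdef
  have hPnn : 0 ≤ P := Real.rpow_nonneg (Real.log_nonneg (by
    rw [le_div_iff₀ hx, one_mul]
    have := Real.exp_one_gt_d9
    linarith)) _
  have h3 : ENNReal.ofReal (P / 8 * G)
      ≤ ∫⁻ z in sphere x ‖x‖, ENNReal.ofReal (exampleFun (m+1) z) ∂μH[(m:ℝ)] := by
    calc ENNReal.ofReal (P / 8 * G)
        = ENNReal.ofReal (P / 8) * ENNReal.ofReal G :=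
          ENNReal.ofReal_mul (by positivity)
      _ = ENNReal.ofReal (P / 8) * μH[(m:ℝ)] {u : E m | 1/2 < ‖u‖ ∧ ‖u‖ ≤ 3/4} := by
          rw [hGdef, ENNReal.ofReal_toReal hγtop]
      _ ≤ _ := hlow
  calc ENNReal.ofReal (G / (8 * (B + 1)) * ‖x‖ ^ ((1:ℝ) - ((m+1:ℕ):ℝ)) * P)
      = ENNReal.ofReal ((P / 8 * G) / (‖x‖ ^ (m:ℝ) * (B + 1))) := by
        congr 1
        have he : ((1:ℝ) - ((m+1:ℕ):ℝ)) = -(m:ℝ) := by push_cast; ring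
        rw [he, Real.rpow_neg hx.le]
        field_simp
    _ = ENNReal.ofReal (P / 8 * G) / ENNReal.ofReal (‖x‖ ^ (m:ℝ) * (B + 1)) :=
        ENNReal.ofReal_div_of_pos (by positivity)
    _ = (ENNReal.ofReal (‖x‖ ^ (m:ℝ) * (B + 1)))⁻¹ * ENNReal.ofReal (P / 8 * G) := by
        rw [div_eq_mul_inv, mul_comm]
    _ ≤ (μH[(m:ℝ)] (sphere x ‖x‖))⁻¹ *
          ∫⁻ z in sphere x ‖x‖, ENNReal.ofReal (exampleFun (m+1) z) ∂μH[(m:ℝ)] :=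
        mul_le_mul' h2 h3
end
end
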